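/- arXiv:2403.04616 — 12 statements merged into one kernel-verified Lean document; each statement's English description precedes it below -/
import Mathlib

section
/- Let k ≥ 1 and γ = 0. For every k-portfolio 1 ≥ x_1 > x_2 > ... > x_k ≥ 0 (with x_0 = 1), the unbiased utility satisfies U_0(x_1,...,x_k) = Σ_{i=1}^k x_i(x_{i-1} - x_i) ≤ k/(2(k+1)), and equality holds for the equally spaced portfolio x_i = (k+1-i)/(k+1) for i = 1,...,k. In particular the optimal unbiased k-portfolio is the equally spaced one, with optimal value k/(2(k+1)). -/
/-!
Writing `dᵢ = x_{i-1} - x_i`, each term is `x_i dᵢ = (x_{i-1}² - x_i²)/2 - dᵢ²/2`, so the utility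
telescopes to `(x₀² - x_k² - ∑ dᵢ²)/2`. Cauchy–Schwarz gives `∑ dᵢ² ≥ (x₀ - x_k)²/k`, and the
remaining quadratic in `x_k` is maximised at `x_k = x₀/(k+1)`, i.e. when all `k+1` gaps
`d₁, …, d_k, x_k` are equal.
-/

open Finset

lemma sum_Icc_sub_pred {M : Type*} [AddCommGroup M] (f : ℕ → M) (n : ℕ) :
    ∑ i ∈ Icc 1 n, (f (i - 1) - f i) = f 0 - f n := by
  induction n with
  | zero => simp
  | succ n ih =>
    rw [sum_Icc_succ_top (by omega), ih, Nat.add_sub_cancel]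
    abel

lemma sum_Icc_natCast (n : ℕ) : ∑ i ∈ Icc 1 n, (i : ℝ) = n * (n + 1) / 2 := by
  induction n with
  | zero => simp
  | succ n ih =>
    rw [sum_Icc_succ_top (by omega), ih]
    push_cast
    ring

lemma sum_Icc_mul_sub_pred (x : ℕ → ℝ) (k : ℕ) :
    ∑ i ∈ Icc 1 k, x i * (x (i - 1) - x i) =
      (x 0 ^ 2 - x k ^ 2 - ∑ i ∈ Icc 1 k, (x (i - 1) - x i) ^ 2) / 2 := by
  have hterm : ∀ i ∈ Icc 1 k, x i * (x (i - 1) - x i) =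
      ((x (i - 1) ^ 2 - x i ^ 2) - (x (i - 1) - x i) ^ 2) / 2 := fun i _ => by ring
  rw [sum_congr rfl hterm, ← sum_div, sum_sub_distrib, sum_Icc_sub_pred (fun i => x i ^ 2)]

lemma sq_sub_le_mul_sum_sq_sub_pred (x : ℕ → ℝ) (k : ℕ) :
    (x 0 - x k) ^ 2 ≤ k * ∑ i ∈ Icc 1 k, (x (i - 1) - x i) ^ 2 := by
  have h := sq_sum_le_card_mul_sum_sq (s := Icc 1 k) (f := fun i => x (i - 1) - x i)
  rwa [sum_Icc_sub_pred, Nat.card_Icc, Nat.add_sub_cancel] at h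

theorem sum_Icc_mul_sub_pred_le (x : ℕ → ℝ) (k : ℕ) :
    ∑ i ∈ Icc 1 k, x i * (x (i - 1) - x i) ≤ x 0 ^ 2 * k / (2 * (k + 1)) := by
  rcases k.eq_zero_or_pos with rfl | hk
  · simp
  rw [sum_Icc_mul_sub_pred, div_le_div_iff₀ two_pos (by positivity)]
  have hk' : (0 : ℝ) < k := by exact_mod_cast hk
  -- after multiplying by `k` and applying Cauchy–Schwarz, the slack is `((k + 1) x_k - x₀)²`
  nlinarith [sq_sub_le_mul_sum_sq_sub_pred x k, sq_nonneg ((k + 1) * x k - x 0)]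

theorem stmt_3_general (k : ℕ) :
    (∀ x : ℕ → ℝ, x 0 = 1 → x 1 ≤ 1 →
      (∀ i, 1 ≤ i → i < k → x (i + 1) < x i) → 0 ≤ x k →
      ∑ i ∈ Finset.Icc 1 k, x i * (x (i - 1) - x i) ≤ (k : ℝ) / (2 * ((k : ℝ) + 1))) ∧
    (∑ i ∈ Finset.Icc 1 k,
        (((k : ℝ) + 1 - (i : ℝ)) / ((k : ℝ) + 1)) *
          ((((k : ℝ) + 1 - ((i - 1 : ℕ) : ℝ)) / ((k : ℝ) + 1)) -
            ((k : ℝ) + 1 - (i : ℝ)) / ((k : ℝ) + 1))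
      = (k : ℝ) / (2 * ((k : ℝ) + 1))) := by
  refine ⟨fun x h0 _ _ _ => by simpa [h0] using sum_Icc_mul_sub_pred_le x k, ?_⟩
  have hterm : ∀ i ∈ Icc 1 k,
      (((k : ℝ) + 1 - i) / (k + 1)) * (((k + 1 - ((i - 1 : ℕ) : ℝ)) / (k + 1)) -
        (k + 1 - i) / (k + 1)) = (k + 1 - i) / (k + 1) ^ 2 := by
    intro i hi
    rw [Nat.cast_pred (mem_Icc.1 hi).1]
    field_simp
    ring
  rw [sum_congr rfl hterm, ← sum_div, sum_sub_distrib, sum_Icc_natCast, sum_const,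
    Nat.card_Icc, Nat.add_sub_cancel, nsmul_eq_mul]
  field_simp
  ring

/-- For γ = 0, every k-portfolio `1 ≥ x_1 > ⋯ > x_k ≥ 0` (with `x_0 = 1`)
has unbiased utility `∑_{i=1}^k x_i (x_{i-1} - x_i) ≤ k/(2(k+1))`, and the equally
spaced portfolio `x_i = (k+1-i)/(k+1)` achieves this value exactly. -/
theorem stmt_3 (k : ℕ) (hk : 1 ≤ k) :
    (∀ x : ℕ → ℝ, x 0 = 1 → x 1 ≤ 1 →
      (∀ i, 1 ≤ i → i < k → x (i + 1) < x i) → 0 ≤ x k →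
      ∑ i ∈ Finset.Icc 1 k, x i * (x (i - 1) - x i) ≤ (k : ℝ) / (2 * ((k : ℝ) + 1))) ∧
    (∑ i ∈ Finset.Icc 1 k,
        (((k : ℝ) + 1 - (i : ℝ)) / ((k : ℝ) + 1)) *
          ((((k : ℝ) + 1 - ((i - 1 : ℕ) : ℝ)) / ((k : ℝ) + 1)) -
            ((k : ℝ) + 1 - (i : ℝ)) / ((k : ℝ) + 1))
      = (k : ℝ) / (2 * ((k : ℝ) + 1))) :=
  stmt_3_general k
end

section
/- Fix γ > 0 and k ≥ 1, and let 1 ≥ x_1 > x_2 > ... > x_k > 0 be any k-portfolio. Then there exists y with 0 < y < x_k such that appending y as a (k+1)-st school strictly increases the perceived expected utility: U_γ(x_1,...,x_k,y) - U_γ(x_1,...,x_k) = -γ y²(1-y) + y(x_k - y) > 0. Consequently, the optimal perceived expected utility of a γ-biased student is strictly increasing in the portfolio size k. -/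
open Finset

/-- Perceived expected utility of the k-portfolio `x 1 > x 2 > ⋯ > x k`
(with the convention `x 0 = 1`):
`U_γ = ∑_{i=1}^k [ -γ(1-x_i)x_i² + x_i(x_{i-1} - x_i) ]`. -/
noncomputable def U (γ : ℝ) (k : ℕ) (x : ℕ → ℝ) : ℝ :=
  ∑ i ∈ Finset.Icc 1 k, (-γ * (1 - x i) * (x i) ^ 2 + x i * (x (i - 1) - x i))

open Filter Topology

lemma U_congr {γ : ℝ} {k : ℕ} {x x' : ℕ → ℝ} (h : ∀ i ≤ k, x i = x' i) :
    U γ k x = U γ k x' :=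
  sum_congr rfl fun i hi ↦ by
    rw [mem_Icc] at hi
    rw [h i hi.2, h (i - 1) (by omega)]

lemma U_succ (γ : ℝ) (k : ℕ) (x : ℕ → ℝ) :
    U γ (k + 1) x =
      U γ k x + (-γ * (1 - x (k + 1)) * x (k + 1) ^ 2 + x (k + 1) * (x k - x (k + 1))) := by
  rw [U, sum_Icc_succ_top (by omega)]
  rfl

lemma U_succ_update_sub (γ : ℝ) (k : ℕ) (x : ℕ → ℝ) (y : ℝ) :
    U γ (k + 1) (Function.update x (k + 1) y) - U γ k x =
      -γ * y ^ 2 * (1 - y) + y * (x k - y) := by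
  have hx : U γ k (Function.update x (k + 1) y) = U γ k x :=
    U_congr fun i hi ↦ Function.update_of_ne (by omega) _ _
  rw [U_succ, hx, Function.update_self, Function.update_of_ne (by omega)]
  ring

/-- The gain is `y * (c - y - γ y (1 - y))`, whose second factor tends to `c > 0`
as `y → 0`. -/
lemma exists_pos_marginal_gain (γ : ℝ) {c : ℝ} (hc : 0 < c) :
    ∃ y : ℝ, 0 < y ∧ y < c ∧ 0 < -γ * y ^ 2 * (1 - y) + y * (c - y) := by
  have hcont : Continuous fun y : ℝ ↦ c - y - γ * y * (1 - y) := by fun_prop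
  have hfactor : ∀ᶠ y in 𝓝 (0 : ℝ), 0 < c - y - γ * y * (1 - y) :=
    continuousAt_const.eventually_lt hcont.continuousAt (by simpa using hc)
  have hlt : ∀ᶠ y in 𝓝 (0 : ℝ), y < c := eventually_lt_nhds hc
  have hright : ∀ᶠ y in 𝓝[>] (0 : ℝ), 0 < y := self_mem_nhdsWithin
  obtain ⟨y, hy, hyf, hyc⟩ := (hright.and (nhdsWithin_le_nhds (hfactor.and hlt))).exists
  refine ⟨y, hy, hyc, ?_⟩
  have : 0 < y * (c - y - γ * y * (1 - y)) := mul_pos hy hyf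
  linarith

theorem stmt_5_general (γ : ℝ) (k : ℕ) (x : ℕ → ℝ) (hpos : 0 < x k) :
    ∃ y : ℝ, 0 < y ∧ y < x k ∧
      U γ (k + 1) (Function.update x (k + 1) y) - U γ k x
        = -γ * y ^ 2 * (1 - y) + y * (x k - y) ∧
      0 < -γ * y ^ 2 * (1 - y) + y * (x k - y) ∧
      U γ k x < U γ (k + 1) (Function.update x (k + 1) y) := by
  obtain ⟨y, hy, hyx, hgain⟩ := exists_pos_marginal_gain γ hpos
  have hdiff := U_succ_update_sub γ k x y
  exact ⟨y, hy, hyx, hdiff, hgain, by linarith⟩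

/-- For any γ > 0 and any k-portfolio with `x k > 0`, there is a school
`y ∈ (0, x k)` whose addition as a (k+1)-st school strictly increases the perceived
expected utility, the marginal change being `-γ y²(1-y) + y(x_k - y) > 0`. Hence the
optimal perceived expected utility is strictly increasing in the portfolio size. -/
theorem stmt_5 (γ : ℝ) (hγ : 0 < γ) (k : ℕ) (hk : 1 ≤ k) (x : ℕ → ℝ)
    (hx0 : x 0 = 1) (hx1 : x 1 ≤ 1)
    (hdec : ∀ i, 1 ≤ i → i < k → x (i + 1) < x i) (hpos : 0 < x k) :
    ∃ y : ℝ, 0 < y ∧ y < x k ∧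
      U γ (k + 1) (Function.update x (k + 1) y) - U γ k x
        = -γ * y ^ 2 * (1 - y) + y * (x k - y) ∧
      0 < -γ * y ^ 2 * (1 - y) + y * (x k - y) ∧
      U γ k x < U γ (k + 1) (Function.update x (k + 1) y) :=
  stmt_5_general γ k x hpos
end

section
/- Let γ > 0, let x_1 ∈ [0,1], and let x_2 = 2x_1 - 1 + γ(2x_1 - 3x_1²), and suppose x_2 ≤ x_1. Then x_2 ≤ h(γ), where h(γ) = 1 - γ if 0 < γ < 1/2; h(γ) = (1 - γ + γ²)/(3γ) if 1/2 ≤ γ < 2; and h(γ) = (1 + 2γ + √((1-2γ)² - 4γ))/(6γ) if γ ≥ 2. In particular, in any optimal portfolio of a γ-biased student the second-highest school x_2 is at most h(γ) < 1, independently of the portfolio size k. -/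
/-!
Write `f(x) = 2x - 1 + γ(2x - 3x²)`, a concave parabola with vertex at `(1 + γ)/(3γ)` and
`f(x) - f(y) = (x - y)(2 + 2γ - 3γ(x + y))`. For `γ < 1/2` the vertex lies beyond `1`, so
`f(x₁) ≤ f(1) = 1 - γ`. For `1/2 ≤ γ < 2` we bound `f` by its maximum. For `γ ≥ 2`, `f(x) ≤ x`
holds exactly outside the two fixed points of `f`; the larger one `r` lies right of the vertex,
so either `x₂ ≤ x₁ ≤ r` or `f` decreases past `r` and `x₂ = f(x₁) ≤ f(r) = r`.
-/

/-- The bound `h(γ)` on the second-highest school in an optimal portfolio. -/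
noncomputable def hBound (γ : ℝ) : ℝ :=
  if γ < 1 / 2 then 1 - γ
  else if γ < 2 then (1 - γ + γ ^ 2) / (3 * γ)
  else (1 + 2 * γ + Real.sqrt ((1 - 2 * γ) ^ 2 - 4 * γ)) / (6 * γ)

/-- The second school `x₂` forced by the first-order condition, given `x₁` (and `x₀ = 1`). -/
def focSecond (γ x : ℝ) : ℝ := 2 * x - 1 + γ * (2 * x - 3 * x ^ 2)

namespace focSecond

variable {γ x : ℝ}

theorem sub_eq (γ x y : ℝ) :
    focSecond γ x - focSecond γ y = (x - y) * (2 + 2 * γ - 3 * γ * (x + y)) := by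
  unfold focSecond; ring

theorem le_one_sub (hγ₀ : 0 ≤ γ) (hγ : γ ≤ 1 / 2) (hx : x ≤ 1) : focSecond γ x ≤ 1 - γ := by
  have hfactor : 0 ≤ 2 + 2 * γ - 3 * γ * (x + 1) := by
    nlinarith [mul_le_mul_of_nonneg_left hx hγ₀]
  have hf1 : focSecond γ 1 = 1 - γ := by unfold focSecond; ring
  linarith [sub_eq γ x 1, mul_nonpos_of_nonpos_of_nonneg (sub_nonpos.mpr hx) hfactor]

theorem le_max (hγ : 0 < γ) (x : ℝ) : focSecond γ x ≤ (1 - γ + γ ^ 2) / (3 * γ) := by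
  rw [focSecond, le_div_iff₀ (by positivity)]
  -- completing the square: `1 - γ + γ² - 3γ f(x) = (3γx - (1 + γ))²`
  nlinarith [sq_nonneg (3 * γ * x - (1 + γ))]

theorem le_of_fixedPoint {r : ℝ} (hγ : 0 ≤ γ) (hr : focSecond γ r = r)
    (hr_vertex : 2 + 2 * γ ≤ 6 * γ * r) (hx : focSecond γ x ≤ x) : focSecond γ x ≤ r := by
  rcases le_or_gt x r with hxr | hrx
  · exact hx.trans hxr
  · have hfactor : 2 + 2 * γ - 3 * γ * (x + r) ≤ 0 := by
      nlinarith [mul_le_mul_of_nonneg_left hrx.le hγ]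
    linarith [sub_eq γ x r, mul_nonpos_of_nonneg_of_nonpos (sub_nonneg.mpr hrx.le) hfactor]

theorem fixedPoint_of_sq_eq {s : ℝ} (hγ : 0 < γ) (hs : s ^ 2 = (1 - 2 * γ) ^ 2 - 4 * γ) :
    focSecond γ ((1 + 2 * γ + s) / (6 * γ)) = (1 + 2 * γ + s) / (6 * γ) := by
  unfold focSecond
  field_simp
  linear_combination (-3) * hs

end focSecond

theorem one_le_sqrt_disc {γ : ℝ} (hγ : 2 ≤ γ) : 1 ≤ Real.sqrt ((1 - 2 * γ) ^ 2 - 4 * γ) :=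
  Real.one_le_sqrt.mpr (by nlinarith)

theorem hBound_lt_one {γ : ℝ} (hγ : 0 < γ) : hBound γ < 1 := by
  unfold hBound
  split_ifs with hhalf htwo
  · linarith
  · rw [div_lt_one (by positivity)]
    nlinarith
  · have hsqrt : Real.sqrt ((1 - 2 * γ) ^ 2 - 4 * γ) < 4 * γ - 1 :=
      (Real.sqrt_lt' (by linarith)).mpr (by nlinarith)
    rw [div_lt_one (by positivity)]
    linarith

/-- For γ > 0, if `x1 ∈ [0,1]` and `x2 = 2x1 - 1 + γ(2x1 - 3x1²)`
(the FOC at i = 1, with `x0 = 1`) with `x2 ≤ x1`, then `x2 ≤ h(γ)`, where `h(γ)`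
is the piecewise bound above; moreover `h(γ) < 1`. -/
theorem stmt_6 (γ : ℝ) (hγ : 0 < γ) (x1 x2 : ℝ) (hx1 : x1 ∈ Set.Icc (0:ℝ) 1)
    (hx2 : x2 = 2 * x1 - 1 + γ * (2 * x1 - 3 * x1 ^ 2)) (hle : x2 ≤ x1) :
    x2 ≤ hBound γ ∧ hBound γ < 1 := by
  change x2 = focSecond γ x1 at hx2
  subst hx2
  refine ⟨?_, hBound_lt_one hγ⟩
  unfold hBound
  split_ifs with hhalf htwo
  · exact focSecond.le_one_sub hγ.le hhalf.le hx1.2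
  · exact focSecond.le_max hγ x1
  · have htwo : 2 ≤ γ := not_lt.mp htwo
    have hdisc : 0 ≤ (1 - 2 * γ) ^ 2 - 4 * γ := by nlinarith
    refine focSecond.le_of_fixedPoint hγ.le
      (focSecond.fixedPoint_of_sq_eq hγ (Real.sq_sqrt hdisc)) ?_ hle
    rw [mul_div_cancel₀ _ (by positivity)]
    linarith [one_le_sqrt_disc htwo]
end

section
/- Let γ > 1/3 and let 1 ≥ x_1 > x_2 > ... > x_k > 0 satisfy the FOC recurrence x_{i+1} = 2x_i - x_{i-1} + γ(2x_i - 3x_i²) for 1 ≤ i ≤ k (with x_0 = 1, x_{k+1} = 0). Then at most one index i ∈ {1,...,k} satisfies x_i > 2/3. -/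
/-!
Since `2x - 3x² < 0` for `x > 2/3`, a bias `γ > 1/3` only lowers the FOC step below its value at
`γ = 1/3`, where `x₂ - 2/3 = (1 - x₁)(x₁ - 5/3) ≤ 0`. So `x₁ > 2/3` forces `x₂ < 2/3`, and as the
portfolio is decreasing, only `x₁` can exceed `2/3`.
-/

open Finset

theorem Nat.strictAntiOn_Icc_of_succ_lt {α : Type*} [Preorder α] {f : ℕ → α} {m k : ℕ}
    (hf : ∀ i, m ≤ i → i < k → f (i + 1) < f i) : StrictAntiOn f (Set.Icc m k) :=
  strictAntiOn_of_succ_lt Set.ordConnected_Icc fun i _ hi hsi => by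
    rw [Order.succ_eq_add_one] at hsi ⊢
    exact hf i hi.1 hsi.2

theorem foc_step_lt_two_thirds {γ a : ℝ} (hγ : 1 / 3 < γ) (ha : 2 / 3 < a) (ha1 : a ≤ 1) :
    2 * a - 1 + γ * (2 * a - 3 * a ^ 2) < 2 / 3 := by
  have hneg : 2 * a - 3 * a ^ 2 < 0 := by nlinarith
  calc 2 * a - 1 + γ * (2 * a - 3 * a ^ 2)
      < 2 * a - 1 + 1 / 3 * (2 * a - 3 * a ^ 2) := by
        linarith [mul_lt_mul_of_neg_right hγ hneg]
    _ = 2 / 3 + (1 - a) * (a - 5 / 3) := by ring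
    _ ≤ 2 / 3 := by nlinarith

theorem stmt_7_general (γ : ℝ) (hγ : 1 / 3 < γ) (k : ℕ) (x : ℕ → ℝ)
    (hx0 : x 0 = 1) (hx1 : x 1 ≤ 1)
    (hdec : ∀ i, 1 ≤ i → i < k → x (i + 1) < x i)
    (hrec : ∀ i, 1 ≤ i → i ≤ k →
      x (i + 1) = 2 * x i - x (i - 1) + γ * (2 * x i - 3 * (x i) ^ 2)) :
    ((Finset.Icc 1 k).filter fun i => 2 / 3 < x i).card ≤ 1 := by
  have hanti := (Nat.strictAntiOn_Icc_of_succ_lt hdec).antitoneOn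
  refine card_le_one_iff_subset_singleton.mpr ⟨1, fun i hi => ?_⟩
  obtain ⟨⟨hi1, hik⟩, hxi⟩ := by simpa only [mem_filter, mem_Icc] using hi
  by_contra hne
  have h2i : 2 ≤ i := by rw [mem_singleton] at hne; omega
  have hx1_gt : 2 / 3 < x 1 := hxi.trans_le (hanti ⟨le_rfl, by omega⟩ ⟨hi1, hik⟩ hi1)
  have hx2_gt : 2 / 3 < x 2 := hxi.trans_le (hanti ⟨by norm_num, by omega⟩ ⟨hi1, hik⟩ h2i)
  have hx2 : x 2 = 2 * x 1 - 1 + γ * (2 * x 1 - 3 * x 1 ^ 2) := by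
    simpa [hx0] using hrec 1 le_rfl (by omega)
  exact (foc_step_lt_two_thirds hγ hx1_gt hx1).not_ge (hx2 ▸ hx2_gt.le)

/-- For γ > 1/3, in any portfolio `1 ≥ x_1 > ⋯ > x_k > 0` satisfying the
FOC recurrence `x_{i+1} = 2x_i - x_{i-1} + γ(2x_i - 3x_i²)` for `1 ≤ i ≤ k`
(with `x_0 = 1`, `x_{k+1} = 0`), at most one index `i ∈ {1,…,k}` has `x_i > 2/3`. -/
theorem stmt_7 (γ : ℝ) (hγ : 1 / 3 < γ) (k : ℕ) (x : ℕ → ℝ)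
    (hx0 : x 0 = 1) (hxk1 : x (k + 1) = 0) (hx1 : x 1 ≤ 1)
    (hdec : ∀ i, 1 ≤ i → i < k → x (i + 1) < x i) (hpos : 0 < x k)
    (hrec : ∀ i, 1 ≤ i → i ≤ k →
      x (i + 1) = 2 * x i - x (i - 1) + γ * (2 * x i - 3 * (x i) ^ 2)) :
    ((Finset.Icc 1 k).filter fun i => 2 / 3 < x i).card ≤ 1 :=
  stmt_7_general γ hγ k x hx0 hx1 hdec hrec
end

section
/- Let 0 < γ < 1/3 and let 1 ≥ x_1 > x_2 > ... > x_k > 0 satisfy the FOC recurrence x_{i+1} = 2x_i - x_{i-1} + γ(2x_i - 3x_i²) for 1 ≤ i ≤ k (with x_0 = 1, x_{k+1} = 0). Then the number of indices i ∈ {1,...,k} with x_i > 2/3 is at most 1 + 1/(3γ). -/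
/-!
The gaps `x i - x (i + 1)` satisfy `gap i = gap (i - 1) + γ x_i (3 x_i - 2)`, so they do not
decrease as long as `x_i ≥ 2/3`. If `m` indices have `x_i > 2/3`, these are `1, …, m`, and the
`m - 1` gaps between `x_1` and `x_m` are each at least `x_1 - x_2 = 1 - x_1 + γ x_1 (3 x_1 - 2)`,
while they add up to less than `x_1 - 2/3`. For `x_1 ∈ (2/3, 1]` this forces `3γ(m - 1) ≤ 1`.
-/

open Finset

theorem lt_of_le_card_filter_of_antitoneOn {β : Type*} [LinearOrder β] {f : ℕ → β} {k : ℕ}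
    {c : β} (hf : AntitoneOn f (Set.Icc 1 k)) {i : ℕ} (hi : 1 ≤ i)
    (him : i ≤ #{j ∈ Icc 1 k | c < f j}) : c < f i := by
  have hik : i ≤ k := him.trans ((card_filter_le _ _).trans (by simp))
  by_contra! hfi
  have hsub : {j ∈ Icc 1 k | c < f j} ⊆ Ico 1 i := by
    intro j hj
    rw [mem_filter, mem_Icc] at hj
    refine mem_Ico.2 ⟨hj.1.1, lt_of_not_ge fun hij => ?_⟩
    exact (hj.2.trans_le (hf ⟨hi, hik⟩ hj.1 hij)).not_ge hfi
  have := card_le_card hsub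
  simp only [Nat.card_Ico] at this
  omega

theorem natCast_mul_sub_le_sub_of_le_sub_succ {x : ℕ → ℝ} {n : ℕ}
    (h : ∀ i < n, x 0 - x 1 ≤ x i - x (i + 1)) : n * (x 0 - x 1) ≤ x 0 - x n := by
  have := card_nsmul_le_sum (range n) (fun i => x i - x (i + 1)) _ fun i hi => h i (mem_range.1 hi)
  rwa [sum_range_sub', card_range, nsmul_eq_mul] at this

section FOC

variable {γ : ℝ} {k : ℕ} {x : ℕ → ℝ}

theorem foc_gap_eq {i : ℕ}
    (hrec : x (i + 1) = 2 * x i - x (i - 1) + γ * (2 * x i - 3 * (x i) ^ 2)) :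
    x i - x (i + 1) = x (i - 1) - x i + γ * (x i * (3 * x i - 2)) := by
  rw [hrec]; ring

theorem foc_gap_one_le_gap (hγ : 0 ≤ γ)
    (hrec : ∀ i, 1 ≤ i → i ≤ k →
      x (i + 1) = 2 * x i - x (i - 1) + γ * (2 * x i - 3 * (x i) ^ 2))
    {n : ℕ} (hnk : n ≤ k) (hx : ∀ i, 1 ≤ i → i ≤ n → 2 / 3 ≤ x i) :
    ∀ i, 1 ≤ i → i ≤ n → x 1 - x 2 ≤ x i - x (i + 1) := by
  intro i hi
  induction i, hi using Nat.le_induction with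
  | base => exact fun _ => le_rfl
  | succ i hi ih =>
    intro hin
    have hgap := foc_gap_eq (hrec (i + 1) (by omega) (by omega))
    have hφ : 0 ≤ γ * (x (i + 1) * (3 * x (i + 1) - 2)) := by
      have := hx (i + 1) (by omega) hin
      apply mul_nonneg hγ (mul_nonneg _ _) <;> linarith
    simp only [Nat.add_sub_cancel] at hgap
    linarith [ih (by omega)]

theorem three_mul_nat_le_one_of_foc {t : ℝ} {n : ℕ} (ht : 2 / 3 ≤ t) (ht1 : t ≤ 1)
    (h : n * (1 - t + γ * (t * (3 * t - 2))) < t - 2 / 3) : 3 * γ * n ≤ 1 := by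
  by_contra! H
  have hn : (1 : ℝ) ≤ n := by
    rcases Nat.eq_zero_or_pos n with rfl | hn
    · simp at H; linarith
    · exact_mod_cast hn
  -- `1 - t + t (3t - 2) / 3 - (t - 2/3) = (1 - t) (5/3 - t)`
  nlinarith [mul_nonneg (sub_nonneg.2 hn) (sub_nonneg.2 ht1),
    mul_nonneg (sub_nonneg.2 H.le) (mul_nonneg (by linarith : (0 : ℝ) ≤ t)
      (by linarith : (0 : ℝ) ≤ 3 * t - 2)),
    mul_nonneg (sub_nonneg.2 ht1) (by linarith : (0 : ℝ) ≤ 5 / 3 - t)]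

end FOC

theorem stmt_8_general (γ : ℝ) (hγ0 : 0 < γ) (k : ℕ) (x : ℕ → ℝ)
    (hx0 : x 0 = 1) (hx1 : x 1 ≤ 1)
    (hdec : ∀ i, 1 ≤ i → i < k → x (i + 1) < x i)
    (hrec : ∀ i, 1 ≤ i → i ≤ k →
      x (i + 1) = 2 * x i - x (i - 1) + γ * (2 * x i - 3 * (x i) ^ 2)) :
    ((((Finset.Icc 1 k).filter fun i => 2 / 3 < x i).card : ℝ)) ≤ 1 + 1 / (3 * γ) := by
  set m := ((Finset.Icc 1 k).filter fun i => 2 / 3 < x i).card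
  have hanti : AntitoneOn x (Set.Icc 1 k) :=
    (strictAntiOn_of_add_one_lt Set.ordConnected_Icc fun i _ hi hi1 =>
      hdec i hi.1 (by simpa using hi1.2)).antitoneOn
  have hbig : ∀ i, 1 ≤ i → i ≤ m → 2 / 3 < x i := fun _ =>
    lt_of_le_card_filter_of_antitoneOn hanti
  have hmk : m ≤ k := (card_filter_le _ _).trans (by simp)
  rcases Nat.eq_zero_or_pos m with hm0 | hm0
  · rw [hm0, Nat.cast_zero]; positivity
  have hsum : ((m - 1 : ℕ) : ℝ) * (x 1 - x 2) ≤ x 1 - x m := by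
    have hgap := foc_gap_one_le_gap hγ0.le hrec (n := m - 1) (by omega)
      fun i hi him => (hbig i hi (by omega)).le
    have := natCast_mul_sub_le_sub_of_le_sub_succ (x := fun i => x (i + 1)) (n := m - 1)
      fun i hi => hgap (i + 1) (by omega) (by omega)
    simpa [Nat.sub_add_cancel hm0] using this
  have hgap1 := foc_gap_eq (hrec 1 le_rfl (by omega))
  simp only [Nat.sub_self, hx0] at hgap1
  have hbound := three_mul_nat_le_one_of_foc (hbig 1 le_rfl hm0).le hx1
    (n := m - 1) (by rw [← hgap1]; linarith [hbig m hm0 le_rfl])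
  rw [Nat.cast_sub hm0, Nat.cast_one] at hbound
  rw [← sub_le_iff_le_add', le_div_iff₀ (by positivity)]
  linarith

/-- For 0 < γ < 1/3, in any portfolio `1 ≥ x_1 > ⋯ > x_k > 0` satisfying
the FOC recurrence `x_{i+1} = 2x_i - x_{i-1} + γ(2x_i - 3x_i²)` for `1 ≤ i ≤ k`
(with `x_0 = 1`, `x_{k+1} = 0`), the number of indices `i ∈ {1,…,k}` with
`x_i > 2/3` is at most `1 + 1/(3γ)`. -/
theorem stmt_8 (γ : ℝ) (hγ0 : 0 < γ) (hγ : γ < 1 / 3) (k : ℕ) (x : ℕ → ℝ)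
    (hx0 : x 0 = 1) (hxk1 : x (k + 1) = 0) (hx1 : x 1 ≤ 1)
    (hdec : ∀ i, 1 ≤ i → i < k → x (i + 1) < x i) (hpos : 0 < x k)
    (hrec : ∀ i, 1 ≤ i → i ≤ k →
      x (i + 1) = 2 * x i - x (i - 1) + γ * (2 * x i - 3 * (x i) ^ 2)) :
    ((((Finset.Icc 1 k).filter fun i => 2 / 3 < x i).card : ℝ)) ≤ 1 + 1 / (3 * γ) :=
  stmt_8_general γ hγ0 k x hx0 hx1 hdec hrec
end

section
/- Let 0 < c < 1 and m ∈ ℕ, and let 1 ≥ x_1 > x_2 > ... > x_k ≥ 0 be any k-portfolio (with x_0 = 1) in which at most m of the schools satisfy x_i > c. Then the true expected payoff satisfies Σ_{i=1}^k x_i(x_{i-1} - x_i) ≤ c²/2 + (1-c²)/2 - (1-c)²/(2(m+1)) = 1/2 - (1-c)²/(2(m+1)). -/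
/-!
Write `d_i = x_i - x_{i+1}` for the gaps of the portfolio extended by `x_{k+1} = 0`. The identity
`2 x_{i+1} d_i = x_i² - x_{i+1}² - d_i²` telescopes to `payoff = 1/2 - (∑ d_i²)/2`.
Since at most `m` schools lie above `c`, some `s ≤ m + 1` has `x_s ≤ c`, so the first `s` gaps
sum to at least `1 - c`, and Cauchy–Schwarz gives `∑ d_i² ≥ (1 - c)² / s ≥ (1 - c)² / (m + 1)`.
-/

open Finset

theorem two_mul_sum_succ_mul_sub (y : ℕ → ℝ) (n : ℕ) :
    2 * ∑ i ∈ range n, y (i + 1) * (y i - y (i + 1))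
      = y 0 ^ 2 - y n ^ 2 - ∑ i ∈ range n, (y i - y (i + 1)) ^ 2 := by
  have hterm : ∀ i, 2 * (y (i + 1) * (y i - y (i + 1)))
      = (y i ^ 2 - y (i + 1) ^ 2) - (y i - y (i + 1)) ^ 2 := fun i => by ring
  rw [mul_sum, sum_congr rfl fun i _ => hterm i, sum_sub_distrib,
    sum_range_sub' (fun i => y i ^ 2)]

theorem sq_sub_le_mul_sum_sq_sub (y : ℕ → ℝ) {s n : ℕ} (hsn : s ≤ n) :
    (y 0 - y s) ^ 2 ≤ s * ∑ i ∈ range n, (y i - y (i + 1)) ^ 2 := by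
  calc (y 0 - y s) ^ 2 = (∑ i ∈ range s, (y i - y (i + 1))) ^ 2 := by
        rw [sum_range_sub']
    _ ≤ s * ∑ i ∈ range s, (y i - y (i + 1)) ^ 2 := by
        simpa using sq_sum_le_card_mul_sum_sq (s := range s) (f := fun i => y i - y (i + 1))
    _ ≤ s * ∑ i ∈ range n, (y i - y (i + 1)) ^ 2 := by
        gcongr

theorem sum_succ_mul_sub_le {y : ℕ → ℝ} {n s : ℕ} {c : ℝ} (hy0 : y 0 = 1) (hyn : y n = 0)
    (hsn : s ≤ n) (hys : y s ≤ c) (hc : c ≤ 1) :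
    ∑ i ∈ range n, y (i + 1) * (y i - y (i + 1)) ≤ 1 / 2 - (1 - c) ^ 2 / (2 * s) := by
  have hpayoff := two_mul_sum_succ_mul_sub y n
  have hgaps := sq_sub_le_mul_sum_sq_sub y hsn
  rw [hy0, hyn] at hpayoff
  rw [hy0] at hgaps
  have hsq : (1 - c) ^ 2 / s ≤ ∑ i ∈ range n, (y i - y (i + 1)) ^ 2 := by
    refine div_le_of_le_mul₀ s.cast_nonneg (sum_nonneg fun _ _ => sq_nonneg _) ?_
    calc (1 - c) ^ 2 ≤ (1 - y s) ^ 2 := by gcongr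
      _ ≤ _ := hgaps.trans_eq (mul_comm _ _)
  rw [mul_comm 2, ← div_div]
  linarith

theorem le_card_filter_lt_of_antitoneOn {α : Type*} [LinearOrder α] {f : ℕ → α} {k j : ℕ}
    {c : α} (hf : AntitoneOn f (Set.Icc 1 k)) (hjk : j ≤ k) (hcj : c < f j) :
    j ≤ #{i ∈ Icc 1 k | c < f i} := by
  calc j = #(Icc 1 j) := by simp
    _ ≤ #{i ∈ Icc 1 k | c < f i} := by
      refine card_le_card fun i hi => ?_
      rw [mem_Icc] at hi
      rw [mem_filter, mem_Icc]
      exact ⟨⟨hi.1, hi.2.trans hjk⟩,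
        hcj.trans_le (hf ⟨hi.1, hi.2.trans hjk⟩ ⟨hi.1.trans hi.2, hjk⟩ hi.2)⟩

theorem sum_Icc_mul_sub_eq_sum_range {x y : ℕ → ℝ} {k : ℕ} (hxy : ∀ i ≤ k, y i = x i)
    (hy : y (k + 1) = 0) :
    ∑ i ∈ Icc 1 k, x i * (x (i - 1) - x i)
      = ∑ i ∈ range (k + 1), y (i + 1) * (y i - y (i + 1)) := by
  rw [sum_range_succ, hy, zero_mul, add_zero, ← Ico_add_one_right_eq_Icc, sum_Ico_eq_sum_range,
    Nat.add_sub_cancel]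
  refine sum_congr rfl fun i hi => ?_
  rw [mem_range] at hi
  rw [add_comm 1 i, Nat.add_sub_cancel, hxy i hi.le, hxy (i + 1) hi]

theorem stmt_11_general (c : ℝ) (hc0 : 0 < c) (hc1 : c < 1) (m k : ℕ) (x : ℕ → ℝ)
    (hx0 : x 0 = 1)
    (hdec : ∀ i, 1 ≤ i → i < k → x (i + 1) < x i)
    (hcount : ((Finset.Icc 1 k).filter fun i => c < x i).card ≤ m) :
    ∑ i ∈ Finset.Icc 1 k, x i * (x (i - 1) - x i)
      ≤ 1 / 2 - (1 - c) ^ 2 / (2 * ((m : ℝ) + 1)) := by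
  set y : ℕ → ℝ := fun i => if i ≤ k then x i else 0
  have hanti : AntitoneOn x (Set.Icc 1 k) :=
    (strictAntiOn_of_succ_lt Set.ordConnected_Icc fun i _ hi hi' =>
      hdec i hi.1 (Order.succ_le_iff.mp hi'.2)).antitoneOn
  obtain ⟨s, hs1, hsm, hsk, hys⟩ : ∃ s, 1 ≤ s ∧ s ≤ m + 1 ∧ s ≤ k + 1 ∧ y s ≤ c := by
    rcases le_or_gt k m with hkm | hmk
    · exact ⟨k + 1, by omega, by omega, le_rfl, by simp [y, hc0.le]⟩
    · refine ⟨m + 1, by omega, le_rfl, by omega, ?_⟩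
      rw [show y (m + 1) = x (m + 1) from if_pos hmk]
      by_contra! hcm
      have := le_card_filter_lt_of_antitoneOn hanti hmk hcm
      omega
  calc ∑ i ∈ Icc 1 k, x i * (x (i - 1) - x i)
      = ∑ i ∈ range (k + 1), y (i + 1) * (y i - y (i + 1)) :=
        sum_Icc_mul_sub_eq_sum_range (fun i hi => if_pos hi) (if_neg (by omega))
    _ ≤ 1 / 2 - (1 - c) ^ 2 / (2 * s) :=
        sum_succ_mul_sub_le (by simp [y, hx0]) (if_neg (by omega)) hsk hys hc1.le
    _ ≤ 1 / 2 - (1 - c) ^ 2 / (2 * ((m : ℝ) + 1)) := by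
        have : (s : ℝ) ≤ m + 1 := by exact_mod_cast hsm
        have : (1 : ℝ) ≤ s := by exact_mod_cast hs1
        gcongr

/-- Let 0 < c < 1 and m ∈ ℕ. For any k-portfolio
`1 ≥ x_1 > ⋯ > x_k ≥ 0` (with `x_0 = 1`) in which at most m schools satisfy
`x_i > c`, the true expected payoff satisfies
`∑_{i=1}^k x_i (x_{i-1} - x_i) ≤ 1/2 - (1-c)²/(2(m+1))`. -/
theorem stmt_11 (c : ℝ) (hc0 : 0 < c) (hc1 : c < 1) (m k : ℕ) (x : ℕ → ℝ)
    (hx0 : x 0 = 1) (hx1 : x 1 ≤ 1)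
    (hdec : ∀ i, 1 ≤ i → i < k → x (i + 1) < x i) (hxk : 0 ≤ x k)
    (hcount : ((Finset.Icc 1 k).filter fun i => c < x i).card ≤ m) :
    ∑ i ∈ Finset.Icc 1 k, x i * (x (i - 1) - x i)
      ≤ 1 / 2 - (1 - c) ^ 2 / (2 * ((m : ℝ) + 1)) :=
  stmt_11_general c hc0 hc1 m k x hx0 hdec hcount
end

section
/- Let γ > 0, k ≥ 1, and let x_0, x_1, ..., x_{k+1} be reals with x_0 = 1 and x_{k+1} = 0 satisfying the recurrence x_{i+1} = 2x_i - x_{i-1} + γ(2x_i - 3x_i²) for all 1 ≤ i ≤ k. Suppose δ̲_i and δ̄_i are reals with δ̲_i ≤ -(2x_i - 3x_i²) ≤ δ̄_i for every 1 ≤ i ≤ k. Then for every 1 ≤ i ≤ k: ((k+1-i)/(k+2-i))·x_{i-1} + (γ/(k+2-i))·Σ_{j=1}^{k+1-i} j·δ̲_{k+1-j} ≤ x_i ≤ ((k+1-i)/(k+2-i))·x_{i-1} + (γ/(k+2-i))·Σ_{j=1}^{k+1-i} j·δ̄_{k+1-j}. -/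
open Finset

/-!
Write `d_i = -(2x_i - 3x_i²)`, so the recurrence says that the second difference of `x` is
`-γ d_i`. Summing it backwards from the boundary value `x_{k+1} = 0` gives the exact identity
`(k+2-i) x_i = (k+1-i) x_{i-1} + γ ∑_{j=1}^{k+1-i} j d_{k+1-j}`,
and the bounds follow by replacing each `d_{k+1-j}` with its lower or upper bound, the weights
`γ j / (k+2-i)` being nonnegative.
-/

theorem mul_eq_add_sum_of_second_diff_eq_neg {R : Type*} [CommRing R] (k : ℕ) (x c : ℕ → R)
    (hend : x (k + 1) = 0)
    (hdiff : ∀ i, 1 ≤ i → i ≤ k → x (i + 1) - 2 * x i + x (i - 1) = -c i)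
    {i : ℕ} (hi : 1 ≤ i) (hik : i ≤ k + 1) :
    ((k : R) + 2 - i) * x i =
      ((k : R) + 1 - i) * x (i - 1) + ∑ j ∈ Icc 1 (k + 1 - i), (j : R) * c (k + 1 - j) := by
  refine Nat.decreasingInduction' (P := fun i => ((k : R) + 2 - i) * x i =
      ((k : R) + 1 - i) * x (i - 1) + ∑ j ∈ Icc 1 (k + 1 - i), (j : R) * c (k + 1 - j))
    (fun i hik hile ih => ?_) hik ?_
  · have hsplit : k + 1 - i = (k + 1 - (i + 1)) + 1 := by omega
    have hlast : k + 1 - (k + 1 - (i + 1) + 1) = i := by omega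
    rw [hsplit, sum_Icc_succ_top (by omega), hlast]
    rw [Nat.add_sub_cancel] at ih
    have hweight : ((k + 1 - (i + 1) + 1 : ℕ) : R) = k + 1 - i := by
      rw [← hsplit, Nat.cast_sub hik.le]
      push_cast
      ring
    rw [hweight]
    push_cast at ih ⊢
    linear_combination ih - ((k : R) + 1 - i) * hdiff i (by omega) (by omega)
  · simp [hend]

theorem stmt_13_general (γ : ℝ) (hγ : 0 < γ) (k : ℕ) (x : ℕ → ℝ)
    (hxk1 : x (k + 1) = 0)
    (hrec : ∀ i, 1 ≤ i → i ≤ k →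
      x (i + 1) = 2 * x i - x (i - 1) + γ * (2 * x i - 3 * (x i) ^ 2))
    (δlo δhi : ℕ → ℝ)
    (hδ : ∀ i, 1 ≤ i → i ≤ k →
      δlo i ≤ -(2 * x i - 3 * (x i) ^ 2) ∧ -(2 * x i - 3 * (x i) ^ 2) ≤ δhi i) :
    ∀ i, 1 ≤ i → i ≤ k →
      ((k : ℝ) + 1 - (i : ℝ)) / ((k : ℝ) + 2 - (i : ℝ)) * x (i - 1)
          + γ / ((k : ℝ) + 2 - (i : ℝ))
            * ∑ j ∈ Finset.Icc 1 (k + 1 - i), (j : ℝ) * δlo (k + 1 - j) ≤ x i ∧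
      x i ≤ ((k : ℝ) + 1 - (i : ℝ)) / ((k : ℝ) + 2 - (i : ℝ)) * x (i - 1)
          + γ / ((k : ℝ) + 2 - (i : ℝ))
            * ∑ j ∈ Finset.Icc 1 (k + 1 - i), (j : ℝ) * δhi (k + 1 - j) := by
  intro i hi hik
  set d : ℕ → ℝ := fun i => -(2 * x i - 3 * (x i) ^ 2)
  have hpos : (0 : ℝ) < (k : ℝ) + 2 - i := by
    have : (i : ℝ) ≤ k := by exact_mod_cast hik
    linarith
  have hid := mul_eq_add_sum_of_second_diff_eq_neg k x (fun i => γ * d i) hxk1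
    (fun i hi hik => by rw [hrec i hi hik]; ring) hi (by omega)
  simp only [mul_left_comm _ γ, ← mul_sum] at hid
  have hxi : x i = ((k : ℝ) + 1 - i) / ((k : ℝ) + 2 - i) * x (i - 1)
      + γ / ((k : ℝ) + 2 - i) * ∑ j ∈ Icc 1 (k + 1 - i), (j : ℝ) * d (k + 1 - j) := by
    field_simp
    linarith
  rw [hxi]
  constructor <;> gcongr with j hj <;> rw [mem_Icc] at hj
  exacts [(hδ _ (by omega) (by omega)).1, (hδ _ (by omega) (by omega)).2]

/-- For a sequence satisfying the FOC recurrence with `x_0 = 1`,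
`x_{k+1} = 0`, and bounds `δ̲_i ≤ -(2x_i - 3x_i²) ≤ δ̄_i`, every `x_i` satisfies
`((k+1-i)/(k+2-i))·x_{i-1} + (γ/(k+2-i))·∑_{j=1}^{k+1-i} j·δ̲_{k+1-j} ≤ x_i ≤`
`((k+1-i)/(k+2-i))·x_{i-1} + (γ/(k+2-i))·∑_{j=1}^{k+1-i} j·δ̄_{k+1-j}`. -/
theorem stmt_13 (γ : ℝ) (hγ : 0 < γ) (k : ℕ) (hk : 1 ≤ k) (x : ℕ → ℝ)
    (hx0 : x 0 = 1) (hxk1 : x (k + 1) = 0)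
    (hrec : ∀ i, 1 ≤ i → i ≤ k →
      x (i + 1) = 2 * x i - x (i - 1) + γ * (2 * x i - 3 * (x i) ^ 2))
    (δlo δhi : ℕ → ℝ)
    (hδ : ∀ i, 1 ≤ i → i ≤ k →
      δlo i ≤ -(2 * x i - 3 * (x i) ^ 2) ∧ -(2 * x i - 3 * (x i) ^ 2) ≤ δhi i) :
    ∀ i, 1 ≤ i → i ≤ k →
      ((k : ℝ) + 1 - (i : ℝ)) / ((k : ℝ) + 2 - (i : ℝ)) * x (i - 1)
          + γ / ((k : ℝ) + 2 - (i : ℝ))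
            * ∑ j ∈ Finset.Icc 1 (k + 1 - i), (j : ℝ) * δlo (k + 1 - j) ≤ x i ∧
      x i ≤ ((k : ℝ) + 1 - (i : ℝ)) / ((k : ℝ) + 2 - (i : ℝ)) * x (i - 1)
          + γ / ((k : ℝ) + 2 - (i : ℝ))
            * ∑ j ∈ Finset.Icc 1 (k + 1 - i), (j : ℝ) * δhi (k + 1 - j) :=
  stmt_13_general γ hγ k x hxk1 hrec δlo δhi hδ
end

section
/- Let γ > 0, k ≥ 1, and let x_0, x_1, ..., x_{k+1} be reals with x_0 = 1 and x_{k+1} = 0 satisfying the recurrence x_{i+1} = 2x_i - x_{i-1} + γ(2x_i - 3x_i²) for all 1 ≤ i ≤ k. Suppose δ̲_i and δ̄_i are reals with δ̲_i ≤ -(2x_i - 3x_i²) ≤ δ̄_i for every 1 ≤ i ≤ k. Then for every 1 ≤ i ≤ k: x_i ≥ (k+1-i)/(k+1) + γ·((k+1-i)/(k+1))·Σ_{j=1}^{i-1} j·δ̲_j + γ·(i/(k+1))·Σ_{j=1}^{k+1-i} j·δ̲_{k+1-j}, and x_i ≤ (k+1-i)/(k+1) + γ·((k+1-i)/(k+1))·Σ_{j=1}^{i-1}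 j·δ̄_j + γ·(i/(k+1))·Σ_{j=1}^{k+1-i} j·δ̄_{k+1-j}. -/
/-!
Writing `δ_i = -(2x_i - 3x_i²)`, the recurrence says that the discrete second difference of `x`
on `[1, k]` is `-γ δ`. Sequences with vanishing second difference are affine, so such a discrete
Dirichlet problem has at most one solution, and the discrete Green function provides it:
`x_i = (k+1-i)/(k+1) + γ ∑ⱼ G(i, j) δ_j`. The Green function is nonnegative and `γ > 0`, so
replacing `δ` by `δ̲` or `δ̄` moves `x_i` down or up.
-/

open Finset

theorem eq_affine_of_secondDiff_eq_zero {k : ℕ} {u : ℕ → ℝ}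
    (h : ∀ i, 1 ≤ i → i ≤ k → u (i + 1) - 2 * u i + u (i - 1) = 0) :
    ∀ i ≤ k + 1, u i = u 0 + i * (u 1 - u 0) := by
  intro i
  induction i using Nat.strong_induction_on with
  | _ i ih =>
    intro hi
    match i with
    | 0 => simp
    | 1 => simp
    | n + 2 =>
      have hn := h (n + 1) (by omega) (by omega)
      rw [Nat.add_sub_cancel, ih (n + 1) (by omega) (by omega), ih n (by omega) (by omega)] at hn
      push_cast at hn ⊢
      linear_combination hn

theorem eqOn_of_secondDiff_eq {k : ℕ} {u v : ℕ → ℝ} (h0 : u 0 = v 0) (hk : u (k + 1) = v (k + 1))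
    (h : ∀ i, 1 ≤ i → i ≤ k →
      u (i + 1) - 2 * u i + u (i - 1) = v (i + 1) - 2 * v i + v (i - 1)) :
    ∀ i ≤ k + 1, u i = v i := by
  have haff := eq_affine_of_secondDiff_eq_zero (u := u - v) fun i hi hik => by
    simp only [Pi.sub_apply]
    linear_combination h i hi hik
  have h1 : u 1 - v 1 = 0 := by
    have hk' := haff (k + 1) le_rfl
    simp only [Pi.sub_apply, h0, hk, sub_self, sub_zero, zero_add] at hk'
    exact (mul_eq_zero.mp hk'.symm).resolve_left (by positivity)
  intro i hi
  have hi' := haff i hi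
  simp only [Pi.sub_apply, h0, sub_self, h1, mul_zero, add_zero] at hi'
  exact sub_eq_zero.mp hi'

/-- `∑ⱼ G(i, j) f j` for the Green function of the discrete `-Δ` on `{0, …, k+1}` with zero
boundary values, `G(i, j) = j (k+1-i)/(k+1)` for `j ≤ i` and `i (k+1-j)/(k+1)` for `j ≥ i`;
the sum over `j ≥ i` is reindexed by `j ↦ k+1-j`, as in the theorem. -/
noncomputable def greenSum (k : ℕ) (f : ℕ → ℝ) (i : ℕ) : ℝ :=
  ((k : ℝ) + 1 - i) / ((k : ℝ) + 1) * ∑ j ∈ Icc 1 (i - 1), (j : ℝ) * f j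
    + (i : ℝ) / ((k : ℝ) + 1) * ∑ j ∈ Icc 1 (k + 1 - i), (j : ℝ) * f (k + 1 - j)

theorem sum_Icc_one_eq_sum_Icc_one_sub_one_add (g : ℕ → ℝ) (n : ℕ) :
    ∑ j ∈ Icc 1 n, (j : ℝ) * g j = ∑ j ∈ Icc 1 (n - 1), (j : ℝ) * g j + n * g n := by
  cases n with
  | zero => simp
  | succ n => rw [Nat.add_sub_cancel, sum_Icc_succ_top (by omega)]

theorem greenSum_zero (k : ℕ) (f : ℕ → ℝ) : greenSum k f 0 = 0 := by
  simp [greenSum]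

theorem greenSum_succ_self (k : ℕ) (f : ℕ → ℝ) : greenSum k f (k + 1) = 0 := by
  simp [greenSum]

theorem greenSum_secondDiff {k i : ℕ} (f : ℕ → ℝ) (hi : 1 ≤ i) (hik : i ≤ k) :
    greenSum k f (i + 1) - 2 * greenSum k f i + greenSum k f (i - 1) = -f i := by
  obtain ⟨m, rfl⟩ : ∃ m, i = m + 1 := ⟨i - 1, by omega⟩
  obtain ⟨n, rfl⟩ : ∃ n, k = m + 1 + n := ⟨k - (m + 1), by omega⟩
  have hS1 := sum_Icc_one_eq_sum_Icc_one_sub_one_add f (m + 1)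
  have hS1' := sum_Icc_one_eq_sum_Icc_one_sub_one_add f m
  have hS2 := sum_Icc_one_eq_sum_Icc_one_sub_one_add (fun j => f (m + 1 + n + 1 - j)) (n + 2)
  have hS2' := sum_Icc_one_eq_sum_Icc_one_sub_one_add (fun j => f (m + 1 + n + 1 - j)) (n + 1)
  simp only [Nat.add_sub_cancel, show n + 2 - 1 = n + 1 by omega,
    show m + 1 + n + 1 - (n + 2) = m by omega,
    show m + 1 + n + 1 - (n + 1) = m + 1 by omega] at hS1 hS2 hS2'
  simp only [greenSum, Nat.add_sub_cancel, show m + 1 + n + 1 - (m + 1 + 1) = n by omega,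
    show m + 1 + n + 1 - (m + 1) = n + 1 by omega, show m + 1 + n + 1 - m = n + 2 by omega,
    hS1, hS1', hS2, hS2']
  push_cast
  field_simp
  ring

theorem greenSum_mono {k i : ℕ} {f g : ℕ → ℝ} (hfg : ∀ j, 1 ≤ j → j ≤ k → f j ≤ g j)
    (hi : 1 ≤ i) (hik : i ≤ k) : greenSum k f i ≤ greenSum k g i := by
  have hik' : (i : ℝ) ≤ k := by exact_mod_cast hik
  have hweight : 0 ≤ ((k : ℝ) + 1 - i) / ((k : ℝ) + 1) := div_nonneg (by linarith) (by positivity)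
  unfold greenSum
  gcongr with j hj j' hj'
  · have := mem_Icc.mp hj
    exact hfg j (by omega) (by omega)
  · have := mem_Icc.mp hj'
    exact hfg _ (by omega) (by omega)

theorem eq_interpolation_add_greenSum {k : ℕ} {u f : ℕ → ℝ}
    (h : ∀ i, 1 ≤ i → i ≤ k → u (i + 1) - 2 * u i + u (i - 1) = -f i) :
    ∀ i ≤ k + 1,
      u i = (((k : ℝ) + 1 - i) * u 0 + i * u (k + 1)) / ((k : ℝ) + 1) + greenSum k f i := by
  have hK : (k : ℝ) + 1 ≠ 0 := by positivity
  apply eqOn_of_secondDiff_eq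
  · simp [greenSum_zero, mul_div_cancel_left₀ _ hK]
  · simp [greenSum_succ_self, mul_div_cancel_left₀ _ hK]
  · intro i hi hik
    rw [h i hi hik]
    push_cast [Nat.cast_sub hi]
    linear_combination -greenSum_secondDiff f hi hik

theorem stmt_14_general (γ : ℝ) (hγ : 0 < γ) (k : ℕ) (x : ℕ → ℝ)
    (hx0 : x 0 = 1) (hxk1 : x (k + 1) = 0)
    (hrec : ∀ i, 1 ≤ i → i ≤ k →
      x (i + 1) = 2 * x i - x (i - 1) + γ * (2 * x i - 3 * (x i) ^ 2))
    (δlo δhi : ℕ → ℝ)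
    (hδ : ∀ i, 1 ≤ i → i ≤ k →
      δlo i ≤ -(2 * x i - 3 * (x i) ^ 2) ∧ -(2 * x i - 3 * (x i) ^ 2) ≤ δhi i) :
    ∀ i, 1 ≤ i → i ≤ k →
      ((k : ℝ) + 1 - (i : ℝ)) / ((k : ℝ) + 1)
          + γ * (((k : ℝ) + 1 - (i : ℝ)) / ((k : ℝ) + 1))
            * ∑ j ∈ Finset.Icc 1 (i - 1), (j : ℝ) * δlo j
          + γ * ((i : ℝ) / ((k : ℝ) + 1))
            * ∑ j ∈ Finset.Icc 1 (k + 1 - i), (j : ℝ) * δlo (k + 1 - j) ≤ x i ∧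
      x i ≤ ((k : ℝ) + 1 - (i : ℝ)) / ((k : ℝ) + 1)
          + γ * (((k : ℝ) + 1 - (i : ℝ)) / ((k : ℝ) + 1))
            * ∑ j ∈ Finset.Icc 1 (i - 1), (j : ℝ) * δhi j
          + γ * ((i : ℝ) / ((k : ℝ) + 1))
            * ∑ j ∈ Finset.Icc 1 (k + 1 - i), (j : ℝ) * δhi (k + 1 - j) := by
  intro i hi hik
  set δ : ℕ → ℝ := fun j => -(2 * x j - 3 * x j ^ 2)
  have hx : x i = ((k : ℝ) + 1 - i) / ((k : ℝ) + 1) + γ * greenSum k δ i := by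
    have hsol := eq_interpolation_add_greenSum (u := x) (f := fun j => γ * δ j)
      (fun j hj hjk => by rw [hrec j hj hjk]; ring) i (by omega)
    rw [hsol, hx0, hxk1]
    simp only [greenSum, mul_left_comm _ γ, ← mul_sum]
    ring
  have hlo := mul_le_mul_of_nonneg_left
    (greenSum_mono (fun j hj hjk => (hδ j hj hjk).1) hi hik) hγ.le
  have hhi := mul_le_mul_of_nonneg_left
    (greenSum_mono (fun j hj hjk => (hδ j hj hjk).2) hi hik) hγ.le
  rw [hx]
  unfold greenSum at hlo hhi ⊢
  constructor <;> linarith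

/-- For a sequence satisfying the FOC recurrence with `x_0 = 1`,
`x_{k+1} = 0`, and bounds `δ̲_i ≤ -(2x_i - 3x_i²) ≤ δ̄_i`, every `x_i` satisfies
`x_i ≥ (k+1-i)/(k+1) + γ((k+1-i)/(k+1))∑_{j=1}^{i-1} j·δ̲_j + γ(i/(k+1))∑_{j=1}^{k+1-i} j·δ̲_{k+1-j}`
and the analogous upper bound with `δ̄` in place of `δ̲`. -/
theorem stmt_14 (γ : ℝ) (hγ : 0 < γ) (k : ℕ) (hk : 1 ≤ k) (x : ℕ → ℝ)
    (hx0 : x 0 = 1) (hxk1 : x (k + 1) = 0)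
    (hrec : ∀ i, 1 ≤ i → i ≤ k →
      x (i + 1) = 2 * x i - x (i - 1) + γ * (2 * x i - 3 * (x i) ^ 2))
    (δlo δhi : ℕ → ℝ)
    (hδ : ∀ i, 1 ≤ i → i ≤ k →
      δlo i ≤ -(2 * x i - 3 * (x i) ^ 2) ∧ -(2 * x i - 3 * (x i) ^ 2) ≤ δhi i) :
    ∀ i, 1 ≤ i → i ≤ k →
      ((k : ℝ) + 1 - (i : ℝ)) / ((k : ℝ) + 1)
          + γ * (((k : ℝ) + 1 - (i : ℝ)) / ((k : ℝ) + 1))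
            * ∑ j ∈ Finset.Icc 1 (i - 1), (j : ℝ) * δlo j
          + γ * ((i : ℝ) / ((k : ℝ) + 1))
            * ∑ j ∈ Finset.Icc 1 (k + 1 - i), (j : ℝ) * δlo (k + 1 - j) ≤ x i ∧
      x i ≤ ((k : ℝ) + 1 - (i : ℝ)) / ((k : ℝ) + 1)
          + γ * (((k : ℝ) + 1 - (i : ℝ)) / ((k : ℝ) + 1))
            * ∑ j ∈ Finset.Icc 1 (i - 1), (j : ℝ) * δhi j
          + γ * ((i : ℝ) / ((k : ℝ) + 1))
            * ∑ j ∈ Finset.Icc 1 (k + 1 - i), (j : ℝ) * δhi (k + 1 - j) :=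
  stmt_14_general γ hγ k x hx0 hxk1 hrec δlo δhi hδ
end

section
/- Let γ > 0, k ≥ 1, and let x_0, x_1, ..., x_{k+1} be reals with x_0 = 1, x_{k+1} = 0, x_i ∈ [0,1] for all i, satisfying the recurrence x_{i+1} = 2x_i - x_{i-1} + γ(2x_i - 3x_i²) for all 1 ≤ i ≤ k. Then for every 1 ≤ i ≤ k: (k+1-i)/(k+1) - (γ/3)·(i(k+1-i)/2) ≤ x_i ≤ (k+1-i)/(k+1) + γ·(i(k+1-i)/2). In particular |x_i - (k+1-i)/(k+1)| ≤ γ(k+1)²/8 for all i. -/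
/-!
Write `K = k + 1` and `q i = i (K - i) / 2`, whose second difference is `-1`. The recurrence says that
the second difference of `x` is `γ (2 x_i - 3 x_i²) ∈ [-γ, γ/3]`, so `x - chord - γ q` and
`chord - (γ/3) q - x` are discretely convex, vanish at both endpoints, and hence are nonpositive by the
discrete maximum principle. Finally `0 ≤ q i ≤ K² / 8`.
-/

lemma le_max_endpoints_of_convex (n : ℕ) (z : ℕ → ℝ)
    (hconv : ∀ j, j + 1 ≤ n → 2 * z (j + 1) ≤ z j + z (j + 2)) :
    ∀ i, i ≤ n + 1 → z i ≤ max (z 0) (z (n + 1)) := by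
  classical
  have hmax : ∃ i, i ≤ n + 1 ∧ ∀ j, j ≤ n + 1 → z j ≤ z i := by
    obtain ⟨i, hi, hle⟩ := (Finset.range (n + 2)).exists_max_image z ⟨0, by simp⟩
    exact ⟨i, by simpa [Nat.lt_succ_iff] using hi,
      fun j hj => hle j (by simpa [Nat.lt_succ_iff] using hj)⟩
  -- the first maximizer cannot be interior: it beats its left neighbour strictly
  set i := Nat.find hmax
  obtain ⟨hi, hle⟩ : i ≤ n + 1 ∧ ∀ j, j ≤ n + 1 → z j ≤ z i := Nat.find_spec hmax
  intro l hl
  refine (hle l hl).trans ?_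
  rcases Nat.eq_zero_or_pos i with h0 | hpos
  · rw [h0]; exact le_max_left _ _
  rcases hi.eq_or_lt with hlast | hinner
  · rw [hlast]; exact le_max_right _ _
  obtain ⟨j, hj⟩ : ∃ j, i = j + 1 := ⟨i - 1, by omega⟩
  have hleft : z j < z (j + 1) := by
    have hnot := Nat.find_min hmax (show j < i by omega)
    push Not at hnot
    obtain ⟨m, hm, hlt⟩ := hnot (by omega)
    exact hlt.trans_le (hj ▸ hle m hm)
  have hright : z (j + 2) ≤ z (j + 1) := hj ▸ hle (j + 2) (by omega)
  linarith [hconv j (by omega)]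

lemma le_chord_add_of_secondDiff_ge (n : ℕ) (c : ℝ) (x : ℕ → ℝ)
    (hdiff : ∀ j, j + 1 ≤ n → -c ≤ x j + x (j + 2) - 2 * x (j + 1)) :
    ∀ i, i ≤ n + 1 →
      x i ≤ (((n : ℝ) + 1 - i) * x 0 + i * x (n + 1)) / ((n : ℝ) + 1)
        + c * (i * ((n : ℝ) + 1 - i) / 2) := by
  have hN : (0 : ℝ) < (n : ℝ) + 1 := by positivity
  set z : ℕ → ℝ := fun i => x i - (((n : ℝ) + 1 - i) * x 0 + i * x (n + 1)) / ((n : ℝ) + 1)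
    - c * (i * ((n : ℝ) + 1 - i) / 2) with hz
  have hconv : ∀ j, j + 1 ≤ n → 2 * z (j + 1) ≤ z j + z (j + 2) := by
    intro j hj
    have hsecond : z j + z (j + 2) - 2 * z (j + 1) = x j + x (j + 2) - 2 * x (j + 1) + c := by
      simp only [hz]; push_cast; field_simp; ring
    linarith [hdiff j hj]
  have hz0 : z 0 = 0 := by simp only [hz]; push_cast; field_simp; ring
  have hzn : z (n + 1) = 0 := by simp only [hz]; push_cast; field_simp; ring
  intro i hi
  have hzi := le_max_endpoints_of_convex n z hconv i hi
  rw [hz0, hzn, max_self] at hzi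
  simp only [hz] at hzi
  linarith

lemma chord_sub_le_of_secondDiff_le (n : ℕ) (c : ℝ) (x : ℕ → ℝ)
    (hdiff : ∀ j, j + 1 ≤ n → x j + x (j + 2) - 2 * x (j + 1) ≤ c) :
    ∀ i, i ≤ n + 1 →
      (((n : ℝ) + 1 - i) * x 0 + i * x (n + 1)) / ((n : ℝ) + 1)
        - c * (i * ((n : ℝ) + 1 - i) / 2) ≤ x i := by
  intro i hi
  have h := le_chord_add_of_secondDiff_ge n c (fun j => -x j)
    (fun j hj => by linarith [hdiff j hj]) i hi
  have hneg : (((n : ℝ) + 1 - i) * -x 0 + i * -x (n + 1)) / ((n : ℝ) + 1)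
      = -((((n : ℝ) + 1 - i) * x 0 + i * x (n + 1)) / ((n : ℝ) + 1)) := by ring
  simp only [hneg] at h
  linarith

theorem stmt_15_general (γ : ℝ) (hγ : 0 < γ) (k : ℕ) (x : ℕ → ℝ)
    (hx0 : x 0 = 1) (hxk1 : x (k + 1) = 0)
    (hmem : ∀ i, i ≤ k + 1 → x i ∈ Set.Icc (0:ℝ) 1)
    (hrec : ∀ i, 1 ≤ i → i ≤ k →
      x (i + 1) = 2 * x i - x (i - 1) + γ * (2 * x i - 3 * (x i) ^ 2)) :
    ∀ i, 1 ≤ i → i ≤ k →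
      (((k : ℝ) + 1 - (i : ℝ)) / ((k : ℝ) + 1)
          - γ / 3 * ((i : ℝ) * ((k : ℝ) + 1 - (i : ℝ)) / 2) ≤ x i ∧
        x i ≤ ((k : ℝ) + 1 - (i : ℝ)) / ((k : ℝ) + 1)
          + γ * ((i : ℝ) * ((k : ℝ) + 1 - (i : ℝ)) / 2)) ∧
      |x i - ((k : ℝ) + 1 - (i : ℝ)) / ((k : ℝ) + 1)| ≤ γ * ((k : ℝ) + 1) ^ 2 / 8 := by
  have hsecond : ∀ j, j + 1 ≤ k →
      x j + x (j + 2) - 2 * x (j + 1) = γ * (2 * x (j + 1) - 3 * x (j + 1) ^ 2) := by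
    intro j hj
    have h := hrec (j + 1) (by omega) hj
    rw [Nat.add_sub_cancel] at h
    rw [show j + 2 = j + 1 + 1 from rfl, h]
    ring
  have hupper := le_chord_add_of_secondDiff_ge k γ x fun j hj => by
    obtain ⟨h0, h1⟩ := hmem (j + 1) (by omega)
    rw [hsecond j hj]
    nlinarith [mul_nonneg hγ.le (mul_nonneg (sub_nonneg.2 h1) (by linarith : (0:ℝ) ≤ 1 + 3 * x (j + 1)))]
  have hlower := chord_sub_le_of_secondDiff_le k (γ / 3) x fun j hj => by
    rw [hsecond j hj]
    nlinarith [mul_nonneg hγ.le (sq_nonneg (x (j + 1) - 1 / 3))]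
  intro i _ hik
  have hu := hupper i (by omega)
  have hl := hlower i (by omega)
  rw [hx0, hxk1, mul_one, mul_zero, add_zero] at hu hl
  have hik' : (i : ℝ) ≤ k := by exact_mod_cast hik
  have hq_nonneg : 0 ≤ (i : ℝ) * ((k : ℝ) + 1 - i) / 2 :=
    div_nonneg (mul_nonneg i.cast_nonneg (by linarith)) zero_le_two
  have hq_le : (i : ℝ) * ((k : ℝ) + 1 - i) / 2 ≤ ((k : ℝ) + 1) ^ 2 / 8 := by
    nlinarith [sq_nonneg ((i : ℝ) - ((k : ℝ) + 1) / 2)]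
  refine ⟨⟨hl, hu⟩, abs_le.2 ⟨?_, ?_⟩⟩ <;> nlinarith

/-- For a sequence in [0,1] satisfying the FOC recurrence with
`x_0 = 1` and `x_{k+1} = 0`, every `x_i` satisfies
`(k+1-i)/(k+1) - (γ/3)(i(k+1-i)/2) ≤ x_i ≤ (k+1-i)/(k+1) + γ(i(k+1-i)/2)`;
in particular `|x_i - (k+1-i)/(k+1)| ≤ γ(k+1)²/8`. -/
theorem stmt_15 (γ : ℝ) (hγ : 0 < γ) (k : ℕ) (hk : 1 ≤ k) (x : ℕ → ℝ)
    (hx0 : x 0 = 1) (hxk1 : x (k + 1) = 0)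
    (hmem : ∀ i, i ≤ k + 1 → x i ∈ Set.Icc (0:ℝ) 1)
    (hrec : ∀ i, 1 ≤ i → i ≤ k →
      x (i + 1) = 2 * x i - x (i - 1) + γ * (2 * x i - 3 * (x i) ^ 2)) :
    ∀ i, 1 ≤ i → i ≤ k →
      (((k : ℝ) + 1 - (i : ℝ)) / ((k : ℝ) + 1)
          - γ / 3 * ((i : ℝ) * ((k : ℝ) + 1 - (i : ℝ)) / 2) ≤ x i ∧
        x i ≤ ((k : ℝ) + 1 - (i : ℝ)) / ((k : ℝ) + 1)
          + γ * ((i : ℝ) * ((k : ℝ) + 1 - (i : ℝ)) / 2)) ∧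
      |x i - ((k : ℝ) + 1 - (i : ℝ)) / ((k : ℝ) + 1)| ≤ γ * ((k : ℝ) + 1) ^ 2 / 8 :=
  stmt_15_general γ hγ k x hx0 hxk1 hmem hrec
end

section
/- Let 0 < γ < 2 - √3 and let z ∈ (0,2). Then (1+γ)² - 3γz > 0, and the real number x := (1 + γ - √((1+γ)² - 3γz))/(3γ) satisfies the equation 2x - z + γ(2x - 3x²) = 0. Moreover x ≤ z/2 if and only if z ≤ 4/3; that is, writing z = a + b for two schools a < b already in the portfolio, the biased student's optimal intermediate school x lies strictly above the midpoint (a+b)/2 (the unbiased student's choice) when a + b > 4/3, and strictly below it when a + b < 4/3. -/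
/-!
The first-order condition is the quadratic `3γx² - 2(1+γ)x + z = 0`, whose discriminant over four
is `D = (1+γ)² - 3γz`; the school `x` is its smaller root. Writing `L = 1 + γ - 3γz/2`, we have
`x - z/2 = (L - √D)/(3γ)` and `L² - D = (9/4)γ²z(z - 4/3)`, so as long as `L > 0` the sign of
`x - z/2` is the sign of `z - 4/3`. On `z ∈ (0,2)`, `D > 0` amounts to `(2 - γ)² > 3`, i.e.
`γ < 2 - √3`, and `L > 0` because then `γ < 1/2`.
-/

open Real

noncomputable def biasedSchool (γ z : ℝ) : ℝ :=
  (1 + γ - √((1 + γ) ^ 2 - 3 * γ * z)) / (3 * γ)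

section BiasedSchool

variable {γ z : ℝ}

lemma three_lt_two_sub_sq (hγ : γ < 2 - √3) : 3 < (2 - γ) ^ 2 := by
  have h : √3 < 2 - γ := by linarith
  simpa using (Real.sqrt_lt' (h.trans_le' (Real.sqrt_nonneg 3))).1 h

lemma discr_pos_of_lt_two_sub_sqrt_three (hγ0 : 0 < γ) (hγ : γ < 2 - √3) (hz : z ≤ 2) :
    0 < (1 + γ) ^ 2 - 3 * γ * z := by
  nlinarith [three_lt_two_sub_sq hγ]

lemma lt_half_of_lt_two_sub_sqrt_three (hγ : γ < 2 - √3) : γ < 1 / 2 := by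
  have : (3 / 2 : ℝ) < √3 := (Real.lt_sqrt (by norm_num)).2 (by norm_num)
  linarith

lemma biasedSchool_foc (hγ : γ ≠ 0) (hD : 0 ≤ (1 + γ) ^ 2 - 3 * γ * z) :
    2 * biasedSchool γ z - z + γ * (2 * biasedSchool γ z - 3 * biasedSchool γ z ^ 2) = 0 := by
  unfold biasedSchool
  have hs := Real.sq_sqrt hD
  set s := √((1 + γ) ^ 2 - 3 * γ * z)
  field_simp
  linear_combination -hs

lemma biasedSchool_sub_half (hγ : γ ≠ 0) :
    biasedSchool γ z - z / 2 =
      (1 + γ - 3 * γ * z / 2 - √((1 + γ) ^ 2 - 3 * γ * z)) / (3 * γ) := by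
  unfold biasedSchool
  field_simp
  ring

lemma sq_sub_discr :
    (1 + γ - 3 * γ * z / 2) ^ 2 - ((1 + γ) ^ 2 - 3 * γ * z) = 9 / 4 * γ ^ 2 * z * (z - 4 / 3) := by
  ring

lemma half_lt_biasedSchool_iff (hγ : 0 < γ) (hz : 0 < z) (hL : 0 < 1 + γ - 3 * γ * z / 2) :
    z / 2 < biasedSchool γ z ↔ 4 / 3 < z := by
  have hc : 0 < 9 / 4 * γ ^ 2 * z := by positivity
  rw [← sub_pos, biasedSchool_sub_half hγ.ne', div_pos_iff_of_pos_right (by positivity), sub_pos,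
    Real.sqrt_lt' hL, ← sub_pos, sq_sub_discr, mul_pos_iff_of_pos_left hc, sub_pos]

lemma biasedSchool_lt_half_iff (hγ : 0 < γ) (hz : 0 < z) (hL : 0 < 1 + γ - 3 * γ * z / 2) :
    biasedSchool γ z < z / 2 ↔ z < 4 / 3 := by
  have hc : 0 < 9 / 4 * γ ^ 2 * z := by positivity
  rw [← sub_neg, biasedSchool_sub_half hγ.ne', div_lt_iff₀ (by positivity), zero_mul, sub_neg,
    Real.lt_sqrt hL.le, ← sub_pos, ← neg_sub, sq_sub_discr, ← mul_neg, neg_sub,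
    mul_pos_iff_of_pos_left hc, sub_pos]

end BiasedSchool

/-- For 0 < γ < 2 - √3 and z ∈ (0,2), we have (1+γ)² - 3γz > 0, and
`x = (1 + γ - √((1+γ)² - 3γz))/(3γ)` solves `2x - z + γ(2x - 3x²) = 0`; moreover
`x ≤ z/2 ↔ z ≤ 4/3`, with strict overshooting `x > z/2` when `z > 4/3` and strict
undershooting `x < z/2` when `z < 4/3` (here `z = a + b` for the two neighboring
schools, and `z/2` is the unbiased student's choice). -/
theorem stmt_17 (γ : ℝ) (hγ0 : 0 < γ) (hγ : γ < 2 - Real.sqrt 3)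
    (z : ℝ) (hz : z ∈ Set.Ioo (0:ℝ) 2) :
    0 < (1 + γ) ^ 2 - 3 * γ * z ∧
    ∀ x : ℝ, x = (1 + γ - Real.sqrt ((1 + γ) ^ 2 - 3 * γ * z)) / (3 * γ) →
      (2 * x - z + γ * (2 * x - 3 * x ^ 2) = 0 ∧
       (x ≤ z / 2 ↔ z ≤ 4 / 3) ∧
       (z < 4 / 3 → x < z / 2) ∧
       (4 / 3 < z → z / 2 < x)) := by
  obtain ⟨hz0, hz2⟩ := hz
  have hD := discr_pos_of_lt_two_sub_sqrt_three hγ0 hγ hz2.le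
  have hL : 0 < 1 + γ - 3 * γ * z / 2 := by
    nlinarith [lt_half_of_lt_two_sub_sqrt_three hγ]
  refine ⟨hD, fun x hx => ?_⟩
  change x = biasedSchool γ z at hx
  subst hx
  refine ⟨biasedSchool_foc hγ0.ne' hD.le, ?_, (biasedSchool_lt_half_iff hγ0 hz0 hL).2,
    (half_lt_biasedSchool_iff hγ0 hz0 hL).2⟩
  rw [← not_lt, half_lt_biasedSchool_iff hγ0 hz0 hL, not_lt]
end

section
/- Let 0 < γ < 2 - √3 and let θ satisfy 1/(2(1+γ)) < θ < (1 + γ - √((1+γ)² - 6γ))/(6γ). Define z(θ) := (6θ(1+γ) - 3)/(9θ²γ). Then 0 < z(θ) < 2, and for every z ∈ (0,2), the number x := (1 + γ - √((1+γ)² - 3γz))/(3γ) (which is well-defined since (1+γ)² - 3γz > 0 and solves 2x - z + γ(2x - 3x²) = 0) satisfies x ≤ θz if and only if z ≤ z(θ). In particular, if a + b > z(θ) then the biased student's optimal intermediate school x between a and b satisfies x > θ(a+b), and if a + b < z(θ) then x < θ(a+b). -/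
/-!
Squaring removes the root: since `1 + γ - 3γθz > 0`, the inequality `x ≤ θz` is equivalent to
`(1 + γ - 3γθz)² ≤ (1 + γ)² - 3γz`, i.e. to `3γz (3γθ²z - 2θ(1 + γ) + 1) ≤ 0`, which is linear in
`z` and says `z ≤ z(θ)`. The bounds on `z(θ)` come from the bounds on `θ`: the lower one makes
the numerator positive, and the upper one places `θ` below the smaller root of
`18γθ² - 6(1 + γ)θ + 3`, which is exactly `z(θ) < 2`.
-/

namespace BiasedChoice

open Real

/-- The interior critical point of the biased student's payoff when `a + b = z`. -/
noncomputable def root (γ z : ℝ) : ℝ :=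
  (1 + γ - √((1 + γ) ^ 2 - 3 * γ * z)) / (3 * γ)

/-- The value `z(θ)` of `a + b` at which the root crosses the line `x = θ (a + b)`. -/
noncomputable def threshold (γ θ : ℝ) : ℝ :=
  (6 * θ * (1 + γ) - 3) / (9 * θ ^ 2 * γ)

lemma discrim_pos_of_lt_two_sub_sqrt_three {γ : ℝ} (hγ : γ < 2 - √3) :
    0 < (1 + γ) ^ 2 - 6 * γ := by
  have h3 : √3 ^ 2 = 3 := sq_sqrt (by norm_num)
  nlinarith [sqrt_nonneg 3]

lemma discrim_pos_of_lt_two {γ z : ℝ} (hγ : 0 < γ) (hd : 0 < (1 + γ) ^ 2 - 6 * γ) (hz : z < 2) :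
    0 < (1 + γ) ^ 2 - 3 * γ * z := by
  nlinarith

lemma root_isRoot {γ z : ℝ} (hγ : 0 < γ) (hD : 0 ≤ (1 + γ) ^ 2 - 3 * γ * z) :
    2 * root γ z - z + γ * (2 * root γ z - 3 * root γ z ^ 2) = 0 := by
  have hs := sq_sqrt hD
  unfold root
  generalize √((1 + γ) ^ 2 - 3 * γ * z) = s at hs ⊢
  field_simp
  linear_combination -hs

lemma root_le_iff {γ z t : ℝ} (hγ : 0 < γ) (ht : 0 < 1 + γ - 3 * γ * t) :
    root γ z ≤ t ↔ (1 + γ - 3 * γ * t) ^ 2 ≤ (1 + γ) ^ 2 - 3 * γ * z := by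
  rw [root, div_le_iff₀ (by positivity), ← le_sqrt' ht]
  constructor <;> intro h <;> linarith

lemma root_le_mul_iff {γ θ z : ℝ} (hγ : 0 < γ) (hθ : 0 < θ) (hz : 0 < z)
    (hθz : 0 < 1 + γ - 3 * γ * (θ * z)) :
    root γ z ≤ θ * z ↔ z ≤ threshold γ θ := by
  have hfactor : (1 + γ - 3 * γ * (θ * z)) ^ 2 - ((1 + γ) ^ 2 - 3 * γ * z)
      = 3 * γ * z * (3 * γ * θ ^ 2 * z - 2 * θ * (1 + γ) + 1) := by ring
  have hγz : 0 < 3 * γ * z := by positivity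
  rw [root_le_iff hγ hθz, threshold, le_div_iff₀ (by positivity), ← sub_nonpos, hfactor]
  constructor
  · intro h
    linarith [nonpos_of_mul_nonpos_right h hγz]
  · intro h
    exact mul_nonpos_of_nonneg_of_nonpos hγz.le (by linarith)

lemma threshold_pos {γ θ : ℝ} (hγ : 0 < γ) (hθ : 1 / (2 * (1 + γ)) < θ) :
    0 < threshold γ θ := by
  rw [div_lt_iff₀ (by positivity)] at hθ
  have hθ0 : 0 < θ := by nlinarith
  exact div_pos (by linarith) (by positivity)

/-- `θ` lies below the smaller root `(1 + γ - √((1 + γ)² - 6γ)) / (6γ)` of this quadratic. -/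
lemma quadratic_pos_of_lt_smaller_root {γ θ : ℝ} (hγ : 0 < γ) (hd : 0 ≤ (1 + γ) ^ 2 - 6 * γ)
    (hθ : θ < (1 + γ - √((1 + γ) ^ 2 - 6 * γ)) / (6 * γ)) :
    0 < 18 * γ * θ ^ 2 - 6 * (1 + γ) * θ + 3 := by
  rw [lt_div_iff₀ (by positivity)] at hθ
  have hs := sq_sqrt hd
  nlinarith [sqrt_nonneg ((1 + γ) ^ 2 - 6 * γ)]

lemma threshold_lt_two {γ θ : ℝ} (hγ : 0 < γ) (hθ : 0 < θ)
    (hq : 0 < 18 * γ * θ ^ 2 - 6 * (1 + γ) * θ + 3) : threshold γ θ < 2 := by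
  rw [threshold, div_lt_iff₀ (by positivity)]
  linarith

end BiasedChoice

open BiasedChoice in
/-- For 0 < γ < 2 - √3 and θ with
`1/(2(1+γ)) < θ < (1 + γ - √((1+γ)² - 6γ))/(6γ)`, setting
`z(θ) = (6θ(1+γ) - 3)/(9θ²γ)` we have `0 < z(θ) < 2`, and for every `z ∈ (0,2)`,
`(1+γ)² - 3γz > 0` and the root `x = (1 + γ - √((1+γ)² - 3γz))/(3γ)` of
`2x - z + γ(2x - 3x²) = 0` satisfies `x ≤ θz ↔ z ≤ z(θ)`. -/
theorem stmt_18 (γ : ℝ) (hγ0 : 0 < γ) (hγ : γ < 2 - Real.sqrt 3) (θ : ℝ)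
    (hθ1 : 1 / (2 * (1 + γ)) < θ)
    (hθ2 : θ < (1 + γ - Real.sqrt ((1 + γ) ^ 2 - 6 * γ)) / (6 * γ)) :
    0 < (6 * θ * (1 + γ) - 3) / (9 * θ ^ 2 * γ) ∧
    (6 * θ * (1 + γ) - 3) / (9 * θ ^ 2 * γ) < 2 ∧
    ∀ z ∈ Set.Ioo (0:ℝ) 2,
      0 < (1 + γ) ^ 2 - 3 * γ * z ∧
      ∀ x : ℝ, x = (1 + γ - Real.sqrt ((1 + γ) ^ 2 - 3 * γ * z)) / (3 * γ) →
        (2 * x - z + γ * (2 * x - 3 * x ^ 2) = 0 ∧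
         (x ≤ θ * z ↔ z ≤ (6 * θ * (1 + γ) - 3) / (9 * θ ^ 2 * γ))) := by
  have hd := discrim_pos_of_lt_two_sub_sqrt_three hγ
  have hθ : 0 < θ := lt_trans (by positivity) hθ1
  refine ⟨threshold_pos hγ0 hθ1,
    threshold_lt_two hγ0 hθ (quadratic_pos_of_lt_smaller_root hγ0 hd.le hθ2), ?_⟩
  rintro z ⟨hz0, hz2⟩
  have hD := discrim_pos_of_lt_two hγ0 hd hz2
  refine ⟨hD, fun x hx => hx ▸ ⟨root_isRoot hγ0 hD.le, root_le_mul_iff hγ0 hθ hz0 ?_⟩⟩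
  have hθ6 : θ * (6 * γ) < 1 + γ := by
    rw [lt_div_iff₀ (by positivity)] at hθ2
    linarith [Real.sqrt_nonneg ((1 + γ) ^ 2 - 6 * γ)]
  nlinarith
end

section
/- There exists γ₀ > 0 such that for every γ with 0 < γ < γ₀ the following holds for k = 5: every tuple x_0, x_1, ..., x_6 of reals with x_0 = 1, x_6 = 0, x_i ∈ [0,1] for all i, satisfying the FOC recurrence x_{i+1} = 2x_i - x_{i-1} + γ(2x_i - 3x_i²) for 1 ≤ i ≤ 5, has x_1 > 5/6 and x_5 < 1/6. That is, a γ-biased student with a 5-school portfolio simultaneously overshoots at the top (her highest school exceeds the rational student's highest school 5/6 = k/(k+1)) and undershoots at the bottom (her lowest school is below the rational student's lowest school 1/6 = 1/(k+1)). -/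
/-!
Write `f v = 2 v - 3 v²`. The FOC says that the second differences of `x` are `γ f(x_i)`, and
summing them against the discrete Green's function of `{0, …, 6}` gives
`6 x₁ = 5 - γ ∑ᵢ (6 - i) f(xᵢ)` and `6 x₅ = 1 - γ ∑ᵢ i f(xᵢ)`.
As `|f| ≤ 1` on `[0, 1]`, `x` stays within `O(γ)` of the rational portfolio `(6 - i)/6`, where `f`
is `4`-Lipschitz; so for small `γ` the two sums are within `O(γ)` of their values `-5/12` and
`35/12` at the rational portfolio, and these signs give the overshoot at the top and the
undershoot at the bottom.
-/

open Finset

/-- The second difference centred at `j + 1`, so that no truncated subtraction `j - 1` occurs. -/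
def secondDiff (x : ℕ → ℝ) (j : ℕ) : ℝ := x (j + 2) - 2 * x (j + 1) + x j

lemma sum_range_secondDiff (x : ℕ → ℝ) (n : ℕ) :
    ∑ j ∈ range n, secondDiff x j = x (n + 1) - x n - (x 1 - x 0) := by
  have := Finset.sum_range_sub (fun i => x (i + 1) - x i) n
  rw [← this]
  refine Finset.sum_congr rfl fun j _ => ?_
  unfold secondDiff
  ring

lemma sum_range_succ_mul_secondDiff (x : ℕ → ℝ) (n : ℕ) :
    ∑ j ∈ range n, ((j : ℝ) + 1) * secondDiff x j = x 0 + n * x (n + 1) - (n + 1) * x n := by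
  induction n with
  | zero => simp
  | succ n ih =>
    rw [sum_range_succ, ih]
    unfold secondDiff
    push_cast
    ring

lemma sum_range_sub_mul_secondDiff (x : ℕ → ℝ) (n : ℕ) :
    ∑ j ∈ range n, ((n : ℝ) - j) * secondDiff x j = n * x 0 + x (n + 1) - (n + 1) * x 1 := by
  have hsplit : ∀ j : ℕ, ((n : ℝ) - j) * secondDiff x j
      = (n + 1) * secondDiff x j - ((j : ℝ) + 1) * secondDiff x j := fun j => by ring
  simp only [hsplit, sum_sub_distrib, ← mul_sum, sum_range_secondDiff, sum_range_succ_mul_secondDiff]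
  ring

lemma abs_sub_le_of_abs_secondDiff_le {y : ℕ → ℝ} {m : ℕ} {ε : ℝ}
    (h : ∀ j < m, |secondDiff y j| ≤ ε) : ∀ i ≤ m, |y (i + 1) - y i| ≤ |y 1 - y 0| + i * ε := by
  intro i hi
  induction i with
  | zero => simp
  | succ i ih =>
    have hstep : y (i + 1 + 1) - y (i + 1) = (y (i + 1) - y i) + secondDiff y i := by
      unfold secondDiff; ring
    calc |y (i + 1 + 1) - y (i + 1)| ≤ |y (i + 1) - y i| + |secondDiff y i| := by
          rw [hstep]; exact abs_add_le _ _
      _ ≤ |y 1 - y 0| + i * ε + ε := add_le_add (ih (by omega)) (h i (by omega))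
      _ = |y 1 - y 0| + (i + 1 : ℕ) * ε := by push_cast; ring

lemma abs_le_of_abs_secondDiff_le {y : ℕ → ℝ} {m : ℕ} {ε : ℝ} (hε : 0 ≤ ε) (h0 : y 0 = 0)
    (h : ∀ j < m, |secondDiff y j| ≤ ε) : ∀ i ≤ m + 1, |y i| ≤ i * |y 1| + i ^ 2 * ε := by
  intro i hi
  induction i with
  | zero => simp [h0]
  | succ i ih =>
    have hdiff := abs_sub_le_of_abs_secondDiff_le h i (by omega)
    rw [h0, sub_zero] at hdiff
    calc |y (i + 1)| ≤ |y i| + |y (i + 1) - y i| := by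
          simpa using abs_add_le (y i) (y (i + 1) - y i)
      _ ≤ i * |y 1| + i ^ 2 * ε + (|y 1| + i * ε) := add_le_add (ih (by omega)) hdiff
      _ ≤ (i + 1 : ℕ) * |y 1| + (i + 1 : ℕ) ^ 2 * ε := by
          push_cast; nlinarith [mul_nonneg (Nat.cast_nonneg i : (0 : ℝ) ≤ i) hε]

def focBias (v : ℝ) : ℝ := 2 * v - 3 * v ^ 2

lemma abs_focBias_le_one {v : ℝ} (hv : v ∈ Set.Icc (0 : ℝ) 1) : |focBias v| ≤ 1 := by
  obtain ⟨h0, h1⟩ := hv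
  refine abs_le.2 ⟨?_, ?_⟩ <;> unfold focBias <;> nlinarith [sq_nonneg (v - 1 / 3)]

lemma abs_focBias_sub_le {u v : ℝ} (hu : u ∈ Set.Icc (0 : ℝ) 1) (hv : v ∈ Set.Icc (0 : ℝ) 1) :
    |focBias u - focBias v| ≤ 4 * |u - v| := by
  have hfactor : focBias u - focBias v = (2 - 3 * (u + v)) * (u - v) := by unfold focBias; ring
  have hslope : |2 - 3 * (u + v)| ≤ 4 := abs_le.2 ⟨by linarith [hu.2, hv.2], by linarith [hu.1, hv.1]⟩
  rw [hfactor, abs_mul]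
  exact mul_le_mul_of_nonneg_right hslope (abs_nonneg _)

noncomputable def linearPortfolio (k i : ℕ) : ℝ := ((k : ℝ) + 1 - i) / (k + 1)

lemma linearPortfolio_mem_Icc {k i : ℕ} (hi : i ≤ k + 1) : linearPortfolio k i ∈ Set.Icc (0 : ℝ) 1 := by
  have hi' : (i : ℝ) ≤ k + 1 := by exact_mod_cast hi
  unfold linearPortfolio
  constructor
  · exact div_nonneg (by linarith) (by positivity)
  · rw [div_le_one (by positivity)]; linarith [(Nat.cast_nonneg i : (0 : ℝ) ≤ i)]

lemma secondDiff_sub_linearPortfolio (x : ℕ → ℝ) (k j : ℕ) :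
    secondDiff (fun i => x i - linearPortfolio k i) j = secondDiff x j := by
  unfold secondDiff linearPortfolio
  push_cast
  field_simp
  ring

structure IsFOCSolution (k : ℕ) (γ : ℝ) (x : ℕ → ℝ) : Prop where
  zero : x 0 = 1
  last : x (k + 1) = 0
  mem_Icc : ∀ i ≤ k + 1, x i ∈ Set.Icc (0 : ℝ) 1
  secondDiff_eq : ∀ j < k, secondDiff x j = γ * focBias (x (j + 1))

namespace IsFOCSolution

variable {k : ℕ} {γ : ℝ} {x : ℕ → ℝ}

lemma mul_first (hx : IsFOCSolution k γ x) :
    (k + 1) * x 1 = k - γ * ∑ j ∈ range k, ((k : ℝ) - j) * focBias (x (j + 1)) := by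
  have := sum_range_sub_mul_secondDiff x k
  rw [hx.zero, hx.last, sum_congr rfl fun j hj => by rw [hx.secondDiff_eq j (mem_range.1 hj)]] at this
  rw [mul_sum]
  simp only [mul_left_comm γ] at this ⊢
  linarith

lemma mul_last (hx : IsFOCSolution k γ x) :
    (k + 1) * x k = 1 - γ * ∑ j ∈ range k, ((j : ℝ) + 1) * focBias (x (j + 1)) := by
  have := sum_range_succ_mul_secondDiff x k
  rw [hx.zero, hx.last, sum_congr rfl fun j hj => by rw [hx.secondDiff_eq j (mem_range.1 hj)]] at this
  rw [mul_sum]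
  simp only [mul_left_comm γ] at this ⊢
  linarith

lemma abs_one_sub_linearPortfolio_le (hx : IsFOCSolution k γ x) (hγ : 0 ≤ γ) :
    |x 1 - linearPortfolio k 1| ≤ k * γ := by
  have hk : (0 : ℝ) < k + 1 := by positivity
  have hsum : |∑ j ∈ range k, ((k : ℝ) - j) * focBias (x (j + 1))| ≤ k * k := by
    calc _ ≤ ∑ j ∈ range k, |((k : ℝ) - j) * focBias (x (j + 1))| := abs_sum_le_sum_abs _ _
      _ ≤ ∑ _j ∈ range k, (k : ℝ) := sum_le_sum fun j hj => by
        have hjk : (j : ℝ) ≤ k := by exact_mod_cast (mem_range.1 hj).le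
        rw [abs_mul, abs_of_nonneg (sub_nonneg.2 hjk)]
        have := abs_focBias_le_one (hx.mem_Icc (j + 1) (by have := mem_range.1 hj; omega))
        nlinarith [(Nat.cast_nonneg j : (0 : ℝ) ≤ j), abs_nonneg (focBias (x (j + 1)))]
      _ = k * k := by simp
  have hfirst : (k + 1) * (x 1 - linearPortfolio k 1)
      = -(γ * ∑ j ∈ range k, ((k : ℝ) - j) * focBias (x (j + 1))) := by
    simp only [linearPortfolio, mul_sub, hx.mul_first]
    field_simp
    push_cast
    ring
  have := congrArg abs hfirst
  rw [abs_mul, abs_neg, abs_mul, abs_of_nonneg hγ, abs_of_pos hk] at this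
  nlinarith [abs_nonneg (x 1 - linearPortfolio k 1)]

lemma abs_sub_linearPortfolio_le (hx : IsFOCSolution k γ x) (hγ : 0 ≤ γ) {i : ℕ} (hi : i ≤ k + 1) :
    |x i - linearPortfolio k i| ≤ 2 * (k + 1) ^ 2 * γ := by
  have hy0 : x 0 - linearPortfolio k 0 = 0 := by
    simp [hx.zero, linearPortfolio, div_self (by positivity : (k : ℝ) + 1 ≠ 0)]
  have hbias : ∀ j < k, |secondDiff (fun i => x i - linearPortfolio k i) j| ≤ γ := fun j hj => by
    rw [secondDiff_sub_linearPortfolio, hx.secondDiff_eq j hj, abs_mul, abs_of_nonneg hγ]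
    exact mul_le_of_le_one_right hγ (abs_focBias_le_one (hx.mem_Icc _ (by omega)))
  have hi' : (i : ℝ) ≤ k + 1 := by exact_mod_cast hi
  calc |x i - linearPortfolio k i|
      ≤ i * |x 1 - linearPortfolio k 1| + i ^ 2 * γ := abs_le_of_abs_secondDiff_le hγ hy0 hbias i hi
    _ ≤ (k + 1) * (k * γ) + (k + 1) ^ 2 * γ := by
        gcongr
        exact hx.abs_one_sub_linearPortfolio_le hγ
    _ ≤ 2 * (k + 1) ^ 2 * γ := by nlinarith

lemma abs_sum_sub_linearPortfolio_le (hx : IsFOCSolution k γ x) (hγ : 0 ≤ γ) {w : ℕ → ℝ}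
    (hw : ∀ j < k, 0 ≤ w j) :
    |∑ j ∈ range k, w j * focBias (x (j + 1)) - ∑ j ∈ range k, w j * focBias (linearPortfolio k (j + 1))|
      ≤ 8 * (k + 1) ^ 2 * γ * ∑ j ∈ range k, w j := by
  rw [← sum_sub_distrib, mul_sum]
  refine (abs_sum_le_sum_abs _ _).trans (sum_le_sum fun j hj => ?_)
  have hjk := mem_range.1 hj
  have hj : j + 1 ≤ k + 1 := by omega
  rw [← mul_sub, abs_mul, abs_of_nonneg (hw j hjk)]
  calc w j * |focBias (x (j + 1)) - focBias (linearPortfolio k (j + 1))|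
      ≤ w j * (4 * (2 * (k + 1) ^ 2 * γ)) := by
        refine mul_le_mul_of_nonneg_left ?_ (hw j hjk)
        exact (abs_focBias_sub_le (hx.mem_Icc _ hj) (linearPortfolio_mem_Icc hj)).trans
          (by gcongr; exact hx.abs_sub_linearPortfolio_le hγ hj)
    _ = 8 * (k + 1) ^ 2 * γ * w j := by ring

end IsFOCSolution

/-- There exists γ₀ > 0 such that for every 0 < γ < γ₀ and k = 5:
every sequence `x_0, …, x_6 ∈ [0,1]` with `x_0 = 1`, `x_6 = 0` satisfying the FOC
recurrence `x_{i+1} = 2x_i - x_{i-1} + γ(2x_i - 3x_i²)` for `1 ≤ i ≤ 5` has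
`x_1 > 5/6` (overshooting at the top) and `x_5 < 1/6` (undershooting at the
bottom), relative to the rational equally spaced portfolio `i/6`. -/
theorem stmt_19 :
    ∃ γ₀ : ℝ, 0 < γ₀ ∧ ∀ γ : ℝ, 0 < γ → γ < γ₀ →
      ∀ x : ℕ → ℝ, x 0 = 1 → x 6 = 0 → (∀ i, i ≤ 6 → x i ∈ Set.Icc (0:ℝ) 1) →
        (∀ i, 1 ≤ i → i ≤ 5 →
          x (i + 1) = 2 * x i - x (i - 1) + γ * (2 * x i - 3 * (x i) ^ 2)) →
        5 / 6 < x 1 ∧ x 5 < 1 / 6 := by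
  refine ⟨1 / 100000, by norm_num, fun γ hγ hγ₀ x hx0 hx6 hbox hrec => ?_⟩
  have hx : IsFOCSolution 5 γ x := ⟨hx0, hx6, hbox, fun j hj => by
    have := hrec (j + 1) (by omega) (by omega)
    simp only [Nat.add_sub_cancel] at this
    unfold secondDiff focBias
    linarith⟩
  have htop : ∑ j ∈ range 5, ((5 : ℕ) - (j : ℝ)) * focBias (x (j + 1)) < 0 := by
    have := abs_le.1 <| hx.abs_sum_sub_linearPortfolio_le hγ.le (w := fun j => (5 : ℕ) - (j : ℝ))
      fun j hj => sub_nonneg.2 (by exact_mod_cast hj.le)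
    norm_num [sum_range_succ, focBias, linearPortfolio] at this ⊢
    linarith
  have hbot : 0 < ∑ j ∈ range 5, ((j : ℝ) + 1) * focBias (x (j + 1)) := by
    have := abs_le.1 <| hx.abs_sum_sub_linearPortfolio_le hγ.le (w := fun j => (j : ℝ) + 1)
      fun j _ => by positivity
    norm_num [sum_range_succ, focBias, linearPortfolio] at this ⊢
    linarith
  have h1 := hx.mul_first
  have h5 := hx.mul_last
  push_cast at h1 h5 htop
  constructor <;> linarith [mul_neg_of_pos_of_neg hγ htop, mul_pos hγ hbot]
end
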